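/- arXiv:1809.03178 — 10 statements merged into one kernel-verified Lean document; each statement's English description precedes it below -/
import Mathlib

section
/- Let n ≥ 2 be an integer, let G be a finite abelian group isomorphic to C_2 ⊕ C_2 ⊕ C_{2n}, and let {f_1, f_2, f_3} be a basis of G with ord(f_1) = ord(f_2) = 2 and ord(f_3) = 2n. Let (α, β, γ) = (n/3, n/3, (n−3)/3) if n ≡ 0 (mod 3), (α, β, γ) = ((n−1)/3, (n−1)/3, (n−1)/3) if n ≡ 1 (mod 3), and (α, β, γ) = ((n+1)/3, (n−2)/3, (n−2)/3) if n ≡ 2 (mod 3). Then the sequence S = 0^{2α+1} f_1^{2β+1} f_2^{2γ+1} (f_3+f_1)^{2α+1} (f_3+f_2)^{2β+1} (f_3+f_1+f_2)^{2γ+1} has length 4n+2, has no zero-sum subsequence of length 2n, and its height h(S) equals 2·max(α,β,γ)+1, namely (2n+3)/3, (2n+1)/3, (2n+5)/3 in the respective cases n ≡ 0, 1, 2 (mod 3). -/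
/-!
Write `S` as `∏ᵢ xᵢ^{mᵢ}` over the six elements `xᵢ = ε₁ f₁ + ε₂ f₂ + ε₃ f₃` with
`(ε₁, ε₂, ε₃)` running through `000, 100, 010, 101, 011, 111`. A subsequence `T` takes `aᵢ ≤ mᵢ`
copies of `xᵢ`, and by independence `σ(T) = 0` means that `a₁ + a₃ + a₅` and `a₂ + a₄ + a₅` are
even and `2n ∣ a₃ + a₄ + a₅`. If `a₃ + a₄ + a₅ = 0`, then `a₁, a₂` are even and
`|T| ≤ (2α + 1) + 2β + 2γ = 2n - 1`; if `a₃ + a₄ + a₅ = 2n`, then `a₃, a₄, a₅` are all even and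
`|T| ≤ 2α + 2β + 2γ = 2n - 2`. Since the six elements are distinct, `h(S)` is the largest `mᵢ`.
-/

open Function

namespace Multiset

variable {α : Type*} [DecidableEq α]

theorem exists_eq_sum_replicate_of_le_sum_replicate :
    ∀ {n : ℕ} {m : Fin n → ℕ} {x : Fin n → α} {T : Multiset α},
      T ≤ ∑ i, replicate (m i) (x i) → ∃ a ≤ m, T = ∑ i, replicate (a i) (x i)
  | 0, _, _, _, hT => ⟨0, by simp, by simpa using hT⟩
  | n + 1, m, x, T, hT => by
    rw [Fin.sum_univ_succ] at hT
    obtain ⟨a, ha, hTa⟩ := exists_eq_sum_replicate_of_le_sum_replicate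
      (Multiset.sub_le_iff_le_add.2 (add_comm (replicate (m 0) (x 0)) _ ▸ hT))
    obtain ⟨k, hk, hTk⟩ :=
      le_replicate_iff.1 (inter_le_right (s := T) (t := replicate (m 0) (x 0)))
    refine ⟨Fin.cons k a, fun i => Fin.cases hk ha i, ?_⟩
    rw [Fin.sum_univ_succ, Fin.cons_zero]
    simp only [Fin.cons_succ]
    rw [← hTk, ← hTa, add_comm, sub_add_inter]

theorem count_sum_replicate_of_injective {ι : Type*} [Fintype ι] {x : ι → α}
    (hx : Injective x) (m : ι → ℕ) (i : ι) :
    count (x i) (∑ j, replicate (m j) (x j)) = m i := by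
  rw [count_sum', Finset.sum_eq_single i (fun j _ hj => by simp [count_replicate, hx.ne hj])
    (by simp)]
  simp

theorem sup_count_sum_replicate {ι : Type*} [Fintype ι] [Fintype α] {x : ι → α}
    (hx : Injective x) (m : ι → ℕ) :
    Finset.univ.sup (fun g => count g (∑ i, replicate (m i) (x i))) = Finset.univ.sup m := by
  apply le_antisymm
  · refine Finset.sup_le fun g _ => ?_
    by_cases hg : g ∈ Set.range x
    · obtain ⟨i, rfl⟩ := hg
      rw [count_sum_replicate_of_injective hx]
      exact Finset.le_sup (Finset.mem_univ i)
    · simp_all [count_sum', count_replicate]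
  · refine Finset.sup_le fun i _ => ?_
    rw [← count_sum_replicate_of_injective hx m i]
    exact Finset.le_sup (f := fun g => count g _) (Finset.mem_univ _)

end Multiset

section IndependentTriple

variable {G : Type*} [AddCommGroup G] {f1 f2 f3 : G}

def IndependentTriple (f1 f2 f3 : G) : Prop :=
  ∀ a b c : ℤ, a • f1 + b • f2 + c • f3 = 0 → a • f1 = 0 ∧ b • f2 = 0 ∧ c • f3 = 0

theorem IndependentTriple.addOrderOf_dvd (h : IndependentTriple f1 f2 f3) {a b c : ℕ}
    (habc : a • f1 + b • f2 + c • f3 = 0) :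
    addOrderOf f1 ∣ a ∧ addOrderOf f2 ∣ b ∧ addOrderOf f3 ∣ c := by
  simp only [addOrderOf_dvd_iff_nsmul_eq_zero, ← natCast_zsmul] at habc ⊢
  exact h a b c habc

def binaryComb (f1 f2 f3 : G) (e : Fin 2 × Fin 2 × Fin 2) : G :=
  (e.1 : ℤ) • f1 + (e.2.1 : ℤ) • f2 + (e.2.2 : ℤ) • f3

theorem IndependentTriple.binaryComb_injective (h : IndependentTriple f1 f2 f3)
    (h1 : f1 ≠ 0) (h2 : f2 ≠ 0) (h3 : f3 ≠ 0) : Injective (binaryComb f1 f2 f3) := by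
  rintro ⟨u1, u2, u3⟩ ⟨v1, v2, v3⟩ huv
  have eq_of_sub_smul : ∀ {f : G}, f ≠ 0 → ∀ i j : Fin 2, ((i : ℤ) - j) • f = 0 → i = j := by
    intro f hf i j hij
    fin_cases i <;> fin_cases j <;> simp_all
  obtain ⟨e1, e2, e3⟩ := h (u1 - v1) (u2 - v2) (u3 - v3)
    (by unfold binaryComb at huv; linear_combination (norm := module) huv)
  rw [eq_of_sub_smul h1 _ _ e1, eq_of_sub_smul h2 _ _ e2, eq_of_sub_smul h3 _ _ e3]

end IndependentTriple

section SixPoints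

variable {G : Type*} [AddCommGroup G] {f1 f2 f3 : G}

def sixPoints (f1 f2 f3 : G) : Fin 6 → G :=
  ![0, f1, f2, f3 + f1, f3 + f2, f3 + f1 + f2]

def sixMultiplicities (α β γ : ℕ) : Fin 6 → ℕ :=
  ![2 * α + 1, 2 * β + 1, 2 * γ + 1, 2 * α + 1, 2 * β + 1, 2 * γ + 1]

def sixSignatures : Fin 6 → Fin 2 × Fin 2 × Fin 2 :=
  ![(0, 0, 0), (1, 0, 0), (0, 1, 0), (1, 0, 1), (0, 1, 1), (1, 1, 1)]

theorem sixPoints_eq_binaryComb : sixPoints f1 f2 f3 = binaryComb f1 f2 f3 ∘ sixSignatures := by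
  funext i
  fin_cases i <;> simp [sixPoints, binaryComb, sixSignatures] <;> abel

theorem IndependentTriple.sixPoints_injective (h : IndependentTriple f1 f2 f3)
    (h1 : f1 ≠ 0) (h2 : f2 ≠ 0) (h3 : f3 ≠ 0) : Injective (sixPoints f1 f2 f3) := by
  rw [sixPoints_eq_binaryComb]
  exact (h.binaryComb_injective h1 h2 h3).comp (by decide)

theorem sup_sixMultiplicities (α β γ : ℕ) :
    Finset.univ.sup (sixMultiplicities α β γ) = 2 * max α (max β γ) + 1 := by
  simp [sixMultiplicities, Fin.univ_succ]

theorem six_counts_sum_ne {n α β γ a0 a1 a2 a3 a4 a5 : ℕ} (hn : α + β + γ + 1 = n)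
    (h0 : a0 ≤ 2 * α + 1) (h1 : a1 ≤ 2 * β + 1) (h2 : a2 ≤ 2 * γ + 1)
    (h3 : a3 ≤ 2 * α + 1) (h4 : a4 ≤ 2 * β + 1) (h5 : a5 ≤ 2 * γ + 1)
    (d1 : 2 ∣ a1 + a3 + a5) (d2 : 2 ∣ a2 + a4 + a5) (d3 : 2 * n ∣ a3 + a4 + a5) :
    a0 + a1 + a2 + a3 + a4 + a5 ≠ 2 * n := by
  obtain ⟨k, hk⟩ := d3
  rcases k with _ | _ | k
  · omega
  · omega
  · have : 2 * n * 2 ≤ 2 * n * (k + 1 + 1) := Nat.mul_le_mul_left _ (by omega)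
    omega

theorem replicate_six_eq_sum_sixPoints (α β γ : ℕ) :
    Multiset.replicate (2 * α + 1) (0 : G) + Multiset.replicate (2 * β + 1) f1
      + Multiset.replicate (2 * γ + 1) f2 + Multiset.replicate (2 * α + 1) (f3 + f1)
      + Multiset.replicate (2 * β + 1) (f3 + f2) + Multiset.replicate (2 * γ + 1) (f3 + f1 + f2)
      = ∑ i, Multiset.replicate (sixMultiplicities α β γ i) (sixPoints f1 f2 f3 i) := by
  rw [Fin.sum_univ_six]
  rfl

theorem not_exists_zero_sum_subsequence_of_card_two_mul [DecidableEq G] {n α β γ : ℕ}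
    (hind : IndependentTriple f1 f2 f3)
    (ho1 : addOrderOf f1 = 2) (ho2 : addOrderOf f2 = 2) (ho3 : addOrderOf f3 = 2 * n)
    (hn : α + β + γ + 1 = n) :
    ¬ ∃ T ≤ ∑ i, Multiset.replicate (sixMultiplicities α β γ i) (sixPoints f1 f2 f3 i),
      Multiset.card T = 2 * n ∧ T.sum = 0 := by
  rintro ⟨T, hT, hcard, hsum⟩
  obtain ⟨a, ha, rfl⟩ := Multiset.exists_eq_sum_replicate_of_le_sum_replicate hT
  simp only [Fin.sum_univ_six, Multiset.card_add, Multiset.card_replicate] at hcard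
  simp only [Fin.sum_univ_six, Multiset.sum_add, Multiset.sum_replicate, sixPoints,
    Matrix.cons_val] at hsum
  obtain ⟨d1, d2, d3⟩ := hind.addOrderOf_dvd (a := a 1 + a 3 + a 5) (b := a 2 + a 4 + a 5)
    (c := a 3 + a 4 + a 5) (by rw [← hsum]; module)
  rw [ho1] at d1
  rw [ho2] at d2
  rw [ho3] at d3
  exact six_counts_sum_ne hn (ha 0) (ha 1) (ha 2) (ha 3) (ha 4) (ha 5) d1 d2 d3 hcard

end SixPoints

theorem stmt_3_general (n : ℕ) (hn : 2 ≤ n) (G : Type*) [AddCommGroup G] [Fintype G] [DecidableEq G]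
    (f1 f2 f3 : G)
    (hind : ∀ a b c : ℤ, a • f1 + b • f2 + c • f3 = 0 →
      a • f1 = 0 ∧ b • f2 = 0 ∧ c • f3 = 0)
    (ho1 : addOrderOf f1 = 2) (ho2 : addOrderOf f2 = 2) (ho3 : addOrderOf f3 = 2 * n)
    (α β γ : ℕ)
    (habc : (n % 3 = 0 ∧ α = n / 3 ∧ β = n / 3 ∧ γ = (n - 3) / 3) ∨
            (n % 3 = 1 ∧ α = (n - 1) / 3 ∧ β = (n - 1) / 3 ∧ γ = (n - 1) / 3) ∨
            (n % 3 = 2 ∧ α = (n + 1) / 3 ∧ β = (n - 2) / 3 ∧ γ = (n - 2) / 3))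
    (S : Multiset G)
    (hS : S = Multiset.replicate (2 * α + 1) (0 : G)
            + Multiset.replicate (2 * β + 1) f1
            + Multiset.replicate (2 * γ + 1) f2
            + Multiset.replicate (2 * α + 1) (f3 + f1)
            + Multiset.replicate (2 * β + 1) (f3 + f2)
            + Multiset.replicate (2 * γ + 1) (f3 + f1 + f2)) :
    Multiset.card S = 4 * n + 2 ∧
    (¬ ∃ T : Multiset G, T ≤ S ∧ Multiset.card T = 2 * n ∧ T.sum = 0) ∧
    Finset.univ.sup (fun g => S.count g) = 2 * max α (max β γ) + 1 ∧
    Finset.univ.sup (fun g => S.count g)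
      = (if n % 3 = 0 then (2 * n + 3) / 3
         else if n % 3 = 1 then (2 * n + 1) / 3
         else (2 * n + 5) / 3) := by
  have hsum : α + β + γ + 1 = n := by
    rcases habc with ⟨h, rfl, rfl, rfl⟩ | ⟨h, rfl, rfl, rfl⟩ | ⟨h, rfl, rfl, rfl⟩ <;> omega
  have hcard : Multiset.card S = 4 * n + 2 := by
    simp only [hS, Multiset.card_add, Multiset.card_replicate]
    omega
  have ne_zero_of_addOrderOf_eq : ∀ {f : G} {k : ℕ}, addOrderOf f = k → k ≠ 1 → f ≠ 0 := by
    rintro f k hf hk rfl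
    exact hk (hf ▸ addOrderOf_zero)
  have hx : Injective (sixPoints f1 f2 f3) := IndependentTriple.sixPoints_injective hind
    (ne_zero_of_addOrderOf_eq ho1 (by norm_num)) (ne_zero_of_addOrderOf_eq ho2 (by norm_num))
    (ne_zero_of_addOrderOf_eq ho3 (by omega))
  rw [replicate_six_eq_sum_sixPoints] at hS
  subst hS
  have hheight := (Multiset.sup_count_sum_replicate hx _).trans (sup_sixMultiplicities α β γ)
  refine ⟨hcard, not_exists_zero_sum_subsequence_of_card_two_mul hind ho1 ho2 ho3 hsum, hheight, ?_⟩
  rw [hheight]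
  rcases habc with ⟨h, rfl, rfl, rfl⟩ | ⟨h, rfl, rfl, rfl⟩ | ⟨h, rfl, rfl, rfl⟩ <;>
    split_ifs <;> omega

/-- The height lower bounds for extremal sequences for `s(C₂ ⊕ C₂ ⊕ C₂ₙ)` are attained. -/
theorem stmt_3 (n : ℕ) (hn : 2 ≤ n) (G : Type*) [AddCommGroup G] [Fintype G] [DecidableEq G]
    (hG : Nonempty (G ≃+ (ZMod 2 × ZMod 2 × ZMod (2 * n))))
    (f1 f2 f3 : G)
    (hgen : AddSubgroup.closure ({f1, f2, f3} : Set G) = ⊤)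
    (hind : ∀ a b c : ℤ, a • f1 + b • f2 + c • f3 = 0 →
      a • f1 = 0 ∧ b • f2 = 0 ∧ c • f3 = 0)
    (ho1 : addOrderOf f1 = 2) (ho2 : addOrderOf f2 = 2) (ho3 : addOrderOf f3 = 2 * n)
    (α β γ : ℕ)
    (habc : (n % 3 = 0 ∧ α = n / 3 ∧ β = n / 3 ∧ γ = (n - 3) / 3) ∨
            (n % 3 = 1 ∧ α = (n - 1) / 3 ∧ β = (n - 1) / 3 ∧ γ = (n - 1) / 3) ∨
            (n % 3 = 2 ∧ α = (n + 1) / 3 ∧ β = (n - 2) / 3 ∧ γ = (n - 2) / 3))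
    (S : Multiset G)
    (hS : S = Multiset.replicate (2 * α + 1) (0 : G)
            + Multiset.replicate (2 * β + 1) f1
            + Multiset.replicate (2 * γ + 1) f2
            + Multiset.replicate (2 * α + 1) (f3 + f1)
            + Multiset.replicate (2 * β + 1) (f3 + f2)
            + Multiset.replicate (2 * γ + 1) (f3 + f1 + f2)) :
    Multiset.card S = 4 * n + 2 ∧
    (¬ ∃ T : Multiset G, T ≤ S ∧ Multiset.card T = 2 * n ∧ T.sum = 0) ∧
    Finset.univ.sup (fun g => S.count g) = 2 * max α (max β γ) + 1 ∧
    Finset.univ.sup (fun g => S.count g)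
      = (if n % 3 = 0 then (2 * n + 3) / 3
         else if n % 3 = 1 then (2 * n + 1) / 3
         else (2 * n + 5) / 3) :=
  stmt_3_general n hn G f1 f2 f3 hind ho1 ho2 ho3 α β γ habc S hS
end

section
/- For every integer r ≥ 2, the smallest nonnegative integer ℓ such that every sequence over C_2^r of length at least ℓ has a nonempty zero-sum subsequence of length at most 3 is ℓ = 1 + 2^{r−1}. That is: every sequence over C_2^r of length at least 1 + 2^{r−1} has a nonempty zero-sum subsequence of length at most 3, and there exists a sequence over C_2^r of length 2^{r−1} with no nonempty zero-sum subsequence of length at most 3. -/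
/-!
A sequence over `C₂ʳ` without a nonempty zero-sum subsequence of length at most 3 is a set `A`
avoiding `0` in which no sum of two distinct elements lies again in `A`. For `a ∈ A` the sets `A`
and `a + A` are then disjoint, so `2 |A| ≤ 2ʳ`. Conversely, the `2ʳ⁻¹` vectors with first
coordinate `1` form such a set: their sums of one or three terms have first coordinate `1`, and
two distinct vectors never sum to `0`.
-/

open Multiset

section AddCommMonoid

variable {G : Type*} [AddCommMonoid G]

def HasZeroSumSubseqOfCardLE (k : ℕ) (S : Multiset G) : Prop :=
  ∃ T : Multiset G, T ≤ S ∧ T ≠ 0 ∧ card T ≤ k ∧ T.sum = 0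

variable {S : Multiset G}

theorem HasZeroSumSubseqOfCardLE.mono {k m : ℕ} (hkm : k ≤ m) :
    HasZeroSumSubseqOfCardLE k S → HasZeroSumSubseqOfCardLE m S := by
  rintro ⟨T, hTS, hT0, hTk, hTsum⟩
  exact ⟨T, hTS, hT0, hTk.trans hkm, hTsum⟩

theorem hasZeroSumSubseqOfCardLE_one_of_zero_mem (h0 : (0 : G) ∈ S) :
    HasZeroSumSubseqOfCardLE 1 S :=
  ⟨{0}, singleton_le.mpr h0, singleton_ne_zero 0, by simp, sum_singleton 0⟩

theorem hasZeroSumSubseqOfCardLE_two_of_not_nodup (hG : ∀ x : G, x + x = 0) (hS : ¬ S.Nodup) :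
    HasZeroSumSubseqOfCardLE 2 S := by
  obtain ⟨x, hx⟩ : ∃ x, replicate 2 x ≤ S := by
    simpa [nodup_iff_ne_cons_cons, le_iff_exists_add, eq_comm] using hS
  exact ⟨replicate 2 x, hx, by simp, by simp, by simp [hG]⟩

end AddCommMonoid

section AddCommGroup

variable {G : Type*} [AddCommGroup G] {S : Multiset G}

theorem hasZeroSumSubseqOfCardLE_three_of_add_mem (hG : ∀ x : G, x + x = 0) {x y : G}
    (hx : x ∈ S) (hy : y ∈ S) (hxy : x ≠ y) (hxyS : x + y ∈ S) :
    HasZeroSumSubseqOfCardLE 3 S := by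
  by_cases h0 : (0 : G) ∈ S
  · exact (hasZeroSumSubseqOfCardLE_one_of_zero_mem h0).mono (by norm_num)
  have hx0 : x + y ≠ x := fun h => h0 (add_eq_left.mp h ▸ hy)
  have hy0 : x + y ≠ y := fun h => h0 (add_eq_right.mp h ▸ hx)
  refine ⟨x ::ₘ y ::ₘ {x + y}, ?_, by simp, by simp, ?_⟩
  · refine (le_iff_subset (by simp [hxy, hx0.symm, hy0.symm])).mpr fun z hz => ?_
    simp only [mem_cons, mem_singleton] at hz
    rcases hz with rfl | rfl | rfl <;> assumption
  · simp only [sum_cons, sum_singleton]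
    rw [show x + (y + (x + y)) = (x + y) + (x + y) by abel]
    exact hG _

theorem two_mul_card_le_of_not_hasZeroSumSubseqOfCardLE_three [Fintype G]
    (hG : ∀ x : G, x + x = 0) (hS : ¬ HasZeroSumSubseqOfCardLE 3 S) :
    2 * card S ≤ Fintype.card G := by
  classical
  have hnd : S.Nodup := by
    by_contra h
    exact hS ((hasZeroSumSubseqOfCardLE_two_of_not_nodup hG h).mono (by norm_num))
  rcases S.empty_or_exists_mem with rfl | ⟨a, ha⟩
  · simp
  set A := S.toFinset
  have hdisj : Disjoint A (A.image (a + ·)) := by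
    simp only [Finset.disjoint_right, Finset.mem_image, A, mem_toFinset]
    rintro _ ⟨x, hx, rfl⟩ hax
    by_cases hxa : x = a
    · subst hxa
      exact hS ((hasZeroSumSubseqOfCardLE_one_of_zero_mem (hG x ▸ hax)).mono (by norm_num))
    · exact hS (hasZeroSumSubseqOfCardLE_three_of_add_mem hG ha hx (Ne.symm hxa) hax)
  calc 2 * card S = (A ∪ A.image (a + ·)).card := by
        rw [Finset.card_union_of_disjoint hdisj,
          Finset.card_image_of_injective _ (add_right_injective a), toFinset_card_of_nodup hnd]
        ring
    _ ≤ Fintype.card G := Finset.card_le_univ _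

theorem not_hasZeroSumSubseqOfCardLE_three_of_map_eq_one (hG : ∀ x : G, x + x = 0)
    (φ : G →+ ZMod 2) (hnd : S.Nodup) (hφ : ∀ x ∈ S, φ x = 1) :
    ¬ HasZeroSumSubseqOfCardLE 3 S := by
  rintro ⟨T, hTS, hT0, hT3, hTsum⟩
  -- `φ` sends a sum of `n` elements of `S` to `n mod 2`
  have hφT : ((card T : ℕ) : ZMod 2) = 0 := by
    have : (T.map φ).sum = φ T.sum := (map_multiset_sum φ T).symm
    rwa [map_congr rfl fun x hx => hφ x (mem_of_le hTS hx), map_const', sum_replicate,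
      hTsum, φ.map_zero, nsmul_one] at this
  have hT2 : card T = 2 := by
    have hpos := card_pos.mpr hT0
    interval_cases h : card T <;> simp_all [show (3 : ZMod 2) = 1 from rfl]
  obtain ⟨x, y, rfl⟩ := card_eq_two.mp hT2
  obtain rfl : y = x := by
    have := eq_neg_of_add_eq_zero_right (by simpa using hTsum)
    rwa [neg_eq_of_add_eq_zero_left (hG x)] at this
  obtain ⟨U, rfl⟩ := Multiset.le_iff_exists_add.mp hTS
  exact nodup_iff_ne_cons_cons.mp hnd y U (by simp)

end AddCommGroup

/-- `s_{[1,3]}(C₂ʳ) = 1 + 2^(r-1)` for `r ≥ 2`. -/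
theorem stmt_5 (r : ℕ) (hr : 2 ≤ r) :
    (∀ S : Multiset (Fin r → ZMod 2), 1 + 2 ^ (r - 1) ≤ Multiset.card S →
      ∃ T : Multiset (Fin r → ZMod 2), T ≤ S ∧ T ≠ 0 ∧ Multiset.card T ≤ 3 ∧ T.sum = 0) ∧
    (∃ S : Multiset (Fin r → ZMod 2), Multiset.card S = 2 ^ (r - 1) ∧
      ¬ ∃ T : Multiset (Fin r → ZMod 2), T ≤ S ∧ T ≠ 0 ∧ Multiset.card T ≤ 3 ∧ T.sum = 0) := by
  obtain ⟨k, rfl⟩ : ∃ k, r = k + 1 := ⟨r - 1, by omega⟩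
  have hG (v : Fin (k + 1) → ZMod 2) : v + v = 0 := funext fun i => CharTwo.add_self_eq_zero (v i)
  refine ⟨fun S hS => ?_, ?_⟩
  · by_contra hS3
    have := two_mul_card_le_of_not_hasZeroSumSubseqOfCardLE_three hG hS3
    simp only [Fintype.card_fun, ZMod.card, Fintype.card_fin, add_tsub_cancel_right,
      pow_succ] at this hS
    omega
  · refine ⟨Finset.univ.val.map (Fin.cons 1), by simp,
      not_hasZeroSumSubseqOfCardLE_three_of_map_eq_one hG (Pi.evalAddMonoidHom _ 0)
        (Finset.univ.nodup.map (Fin.cons_right_injective 1)) ?_⟩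
    simp
end

section
/- Let S be a squarefree sequence of length 5 over C_2^3 (i.e., a set of 5 distinct elements of C_2^3). Then S has exactly one zero-sum subsequence of length 4. -/
/-!
Removing `x` from `S` leaves a subsequence of sum `σ - x`, where `σ` is the sum of `S`; so the
zero-sum subsequences of length `|S| - 1` are `S.erase x` with `x = σ`, and there is exactly one
of them precisely when `σ ∈ S`. For five distinct elements of `C₂³`, let `a, b, c` be the
three missing elements. The elements of `C₂³` sum to `0` and every element is its own negative, so
`σ = a + b + c`, which differs from each of `a, b, c` because they are distinct; hence `σ ∈ S`.
-/

open Finset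

theorem Multiset.existsUnique_le_card_eq_sum_eq_zero {G : Type*} [AddCommGroup G]
    [DecidableEq G] {S : Multiset G} {n : ℕ} (hmem : S.sum ∈ S) (hcard : card S = n + 1) :
    ∃! T : Multiset G, T ≤ S ∧ card T = n ∧ T.sum = 0 := by
  refine ⟨S.erase S.sum, ⟨erase_le _ _, ?_, ?_⟩, ?_⟩
  · rw [card_erase_of_mem hmem, hcard, Nat.pred_succ]
  · simpa using sum_erase hmem
  · rintro T ⟨hle, hTcard, hTsum⟩
    obtain ⟨u, rfl⟩ := le_iff_exists_add.mp hle
    obtain ⟨x, rfl⟩ : ∃ x, u = {x} := card_eq_one.mp (by simpa [hTcard] using hcard)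
    have hx : (T + {x}).sum = x := by simp [hTsum]
    rw [hx, add_comm, singleton_add, erase_cons_head]

theorem Finset.sum_mem_of_card_compl_eq_three {G : Type*} [AddCommGroup G] [Fintype G]
    [DecidableEq G] (hself : ∀ x : G, x + x = 0) (huniv : ∑ x : G, x = 0) {s : Finset G}
    (hs : sᶜ.card = 3) : ∑ x ∈ s, x ∈ s := by
  have hneg : ∀ x y : G, x + y = 0 ↔ x = y := fun x y => by
    rw [add_eq_zero_iff_eq_neg, neg_eq_of_add_eq_zero_left (hself y)]
  have hsum : ∑ x ∈ s, x = ∑ x ∈ sᶜ, x := (hneg _ _).mp (by rw [sum_add_sum_compl, huniv])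
  obtain ⟨a, b, c, hab, hac, hbc, hcompl⟩ := card_eq_three.mp hs
  have hne : a + b + c ∉ sᶜ := by
    have hsa : a + b + c ≠ a := fun h =>
      hbc ((hneg b c).mp (add_left_cancel (a := a) (by rw [add_zero, ← add_assoc, h])))
    have hsb : a + b + c ≠ b := fun h =>
      hac ((hneg a c).mp (add_right_cancel (b := b) (by rw [zero_add, add_right_comm, h])))
    have hsc : a + b + c ≠ c := fun h =>
      hab ((hneg a b).mp (add_right_cancel (b := c) (by rw [zero_add, h])))
    simp [hcompl, hsa, hsb, hsc]
  rw [hsum, hcompl, sum_insert (by simp [hab, hac]), sum_pair hbc, ← add_assoc]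
  simpa using hne

/-- A squarefree sequence of length 5 over `C₂³` has a unique zero-sum subsequence of length 4. -/
theorem stmt_6 (S : Multiset (ZMod 2 × ZMod 2 × ZMod 2))
    (hcard : Multiset.card S = 5) (hsf : S.Nodup) :
    ∃! T : Multiset (ZMod 2 × ZMod 2 × ZMod 2),
      T ≤ S ∧ Multiset.card T = 4 ∧ T.sum = 0 := by
  let s : Finset (ZMod 2 × ZMod 2 × ZMod 2) := ⟨S, hsf⟩
  have hcompl : sᶜ.card = 3 := by rw [card_compl]; simp [s, hcard]
  have hmem : S.sum ∈ S := by
    simpa [s, Finset.sum] using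
      sum_mem_of_card_compl_eq_three CharTwo.add_self_eq_zero (by decide) hcompl
  exact Multiset.existsUnique_le_card_eq_sum_eq_zero hmem hcard
end

section
/- Let H be a cyclic group of order n, where n ≥ 3 is an integer. Every sequence T over H of length |T| = n−1 that contains no short zero-sum subsequence has the form T = g^{n−1} where g ∈ H with ord(g) = n. -/
/-!
A sequence `T` without nonempty zero-sum subsequence has at least `|T| + 1` distinct subsequence
sums (counting the empty one), since adjoining a term `a` adds the sums `a + σ`, none of which is
`0`. If `T` contained two distinct terms `g ≠ x`, say `T = g x R`, then the sums of `R` would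
avoid the three distinct elements `-g`, `-x`, `-(g + x)`, forcing `|R| + 1 ≤ n - 3`, i.e.
`|T| ≤ n - 2`. So `T = g^{n-1}`, and `g^{n-1}` being zero-sum free means `n - 1 < ord(g) ≤ n`.
-/

open Multiset

section ZeroSumFree

variable {H : Type*} [AddCommGroup H]

def IsZeroSumFree (S : Multiset H) : Prop :=
  ∀ U ≤ S, U ≠ 0 → U.sum ≠ 0

namespace IsZeroSumFree

theorem mono {S T : Multiset H} (hT : IsZeroSumFree T) (hST : S ≤ T) : IsZeroSumFree S :=
  fun U hU => hT U (hU.trans hST)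

theorem ne_zero_of_mem {S : Multiset H} (hS : IsZeroSumFree S) {a : H} (ha : a ∈ S) : a ≠ 0 := by
  simpa using hS {a} (singleton_le.mpr ha) (singleton_ne_zero a)

theorem lt_addOrderOf {m : ℕ} {g : H} (hg : IsOfFinAddOrder g)
    (hS : IsZeroSumFree (replicate m g)) : m < addOrderOf g := by
  by_contra! hle
  exact hS _ ((replicate_le_replicate g).mpr hle)
    (card_pos.mp (by simpa using hg.addOrderOf_pos)) (by simp)

end IsZeroSumFree

section subsetSum

variable [DecidableEq H]

/-- The sums of all subsequences of `S`, including the empty one. -/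
def Multiset.subsetSum (S : Multiset H) : Finset H :=
  (S.powerset.map Multiset.sum).toFinset

theorem Multiset.mem_subsetSum {S : Multiset H} {y : H} :
    y ∈ S.subsetSum ↔ ∃ U ≤ S, U.sum = y := by
  simp [Multiset.subsetSum]

theorem IsZeroSumFree.card_add_one_le_card_subsetSum {S : Multiset H} (hS : IsZeroSumFree S) :
    card S + 1 ≤ S.subsetSum.card := by
  induction S using Multiset.induction with
  | empty => simp [Multiset.subsetSum]
  | cons a S ih =>
    have hsub : insert 0 (S.subsetSum.image (a + ·)) ⊆ (a ::ₘ S).subsetSum := by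
      intro y hy
      simp only [Finset.mem_insert, Finset.mem_image, mem_subsetSum] at hy ⊢
      rcases hy with rfl | ⟨_, ⟨U, hU, rfl⟩, rfl⟩
      · exact ⟨0, zero_le _, sum_zero⟩
      · exact ⟨a ::ₘ U, cons_le_cons a hU, sum_cons a U⟩
    have hzero : 0 ∉ S.subsetSum.image (a + ·) := by
      simp only [Finset.mem_image, mem_subsetSum]
      rintro ⟨_, ⟨U, hU, rfl⟩, hsum⟩
      exact hS (a ::ₘ U) (cons_le_cons a hU) (cons_ne_zero) (by rwa [sum_cons])
    have hcard := Finset.card_le_card hsub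
    rw [Finset.card_insert_of_notMem hzero,
      Finset.card_image_of_injective _ (add_right_injective a)] at hcard
    have := ih (hS.mono (le_cons_self S a))
    rw [card_cons]
    omega

theorem IsZeroSumFree.neg_sum_notMem_subsetSum {V R : Multiset H} (hVR : IsZeroSumFree (V + R))
    (hV : V ≠ 0) : -V.sum ∉ R.subsetSum := by
  rw [mem_subsetSum]
  rintro ⟨U, hU, hsum⟩
  refine hVR (V + U) (by gcongr) (by simp [hV]) ?_
  rw [sum_add, hsum, add_neg_cancel]

/-- The subsequence sums of `R` avoid `-g`, `-x` and `-(g + x)`. -/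
theorem IsZeroSumFree.card_add_four_le_card {g x : H} {R : Multiset H} [Fintype H]
    (hS : IsZeroSumFree (g ::ₘ x ::ₘ R)) (hgx : g ≠ x) : card R + 4 ≤ Fintype.card H := by
  have hg : g ≠ 0 := hS.ne_zero_of_mem (mem_cons_self g _)
  have hx : x ≠ 0 := hS.ne_zero_of_mem (mem_cons_of_mem (mem_cons_self x R))
  have hexcl : Disjoint R.subsetSum {-g, -x, -(g + x)} := by
    have h₁ : -g ∉ R.subsetSum := by
      simpa using (hS.mono (cons_le_cons g (le_cons_self R x))).neg_sum_notMem_subsetSum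
        (V := {g}) (singleton_ne_zero g)
    have h₂ : -x ∉ R.subsetSum := by
      simpa using (hS.mono (le_cons_self _ g)).neg_sum_notMem_subsetSum
        (V := {x}) (singleton_ne_zero x)
    have h₃ : -(g + x) ∉ R.subsetSum := by
      simpa using (show IsZeroSumFree ({g, x} + R) by simpa using hS).neg_sum_notMem_subsetSum
        cons_ne_zero
    simp only [Finset.disjoint_right, Finset.mem_insert, Finset.mem_singleton]
    rintro _ (rfl | rfl | rfl) <;> assumption
  have hthree : ({-g, -x, -(g + x)} : Finset H).card = 3 := by
    rw [Finset.card_insert_of_notMem (by simp [hgx, hx]),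
      Finset.card_pair (by simp [hg])]
  have := Finset.card_union_of_disjoint hexcl ▸ Finset.card_le_univ (R.subsetSum ∪ _)
  have := hS.mono (le_cons_self _ g) |>.mono (le_cons_self R x) |>.card_add_one_le_card_subsetSum
  omega

end subsetSum

end ZeroSumFree

theorem stmt_7_general (n : ℕ) (hn : 3 ≤ n) (H : Type*) [AddCommGroup H] [Fintype H]
    (hcardH : Fintype.card H = n)
    (T : Multiset H) (hT : Multiset.card T = n - 1)
    (h : ¬ ∃ U : Multiset H, U ≤ T ∧ U ≠ 0 ∧ Multiset.card U ≤ n ∧ U.sum = 0) :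
    ∃ g : H, addOrderOf g = n ∧ T = Multiset.replicate (n - 1) g := by
  classical
  have hzsf : IsZeroSumFree T := fun U hU hU0 hsum =>
    h ⟨U, hU, hU0, by have := card_le_card hU; omega, hsum⟩
  obtain ⟨g, hg⟩ := exists_mem_of_ne_zero (by rintro rfl; simp at hT; omega : T ≠ 0)
  have hconst : ∀ x ∈ T, x = g := by
    intro x hx
    by_contra hxg
    obtain ⟨R, rfl⟩ : ∃ R, T = g ::ₘ x ::ₘ R :=
      ⟨(T.erase g).erase x, by rw [cons_erase ((mem_erase_of_ne hxg).mpr hx), cons_erase hg]⟩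
    have := hzsf.card_add_four_le_card (Ne.symm hxg)
    simp only [card_cons] at hT
    omega
  have hTg : T = replicate (n - 1) g := eq_replicate.mpr ⟨hT, hconst⟩
  have hord : n - 1 < addOrderOf g := (hTg ▸ hzsf).lt_addOrderOf (isOfFinAddOrder_of_finite g)
  exact ⟨g, le_antisymm (hcardH ▸ addOrderOf_le_card_univ) (by omega), hTg⟩

/-- Inverse problem for `η` of a cyclic group: sequences of length `n-1`
without short zero-sum subsequence. -/
theorem stmt_7 (n : ℕ) (hn : 3 ≤ n) (H : Type*) [AddCommGroup H] [Fintype H]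
    (hcyc : IsAddCyclic H) (hcardH : Fintype.card H = n)
    (T : Multiset H) (hT : Multiset.card T = n - 1)
    (h : ¬ ∃ U : Multiset H, U ≤ T ∧ U ≠ 0 ∧ Multiset.card U ≤ n ∧ U.sum = 0) :
    ∃ g : H, addOrderOf g = n ∧ T = Multiset.replicate (n - 1) g :=
  stmt_7_general n hn H hcardH T hT h
end

section
/- Let G be a finite abelian group and let S be a sequence over G of length η(G) + exp(G) − 1. Let C' be a subsequence of S such that there exists f ∈ G with j·f ∈ Σ_j(C') for every integer j with 1 ≤ j ≤ |C'|. If |C'| ≥ ⌊(exp(G) − 1)/2⌋, then S has a zero-sum subsequence of length exp(G). -/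
/-- The `η`-constant of a finite abelian group `G`: the smallest `ℓ` such that every
sequence over `G` of length at least `ℓ` has a nonempty zero-sum subsequence of length
at most `exp(G)`. -/
noncomputable def etaConst (G : Type*) [AddCommGroup G] [Fintype G] : ℕ :=
  sInf {ℓ : ℕ | ∀ S : Multiset G, ℓ ≤ Multiset.card S →
    ∃ T : Multiset G, T ≤ S ∧ T ≠ 0 ∧ Multiset.card T ≤ AddMonoid.exponent G ∧ T.sum = 0}

section Aux

variable {G : Type*} [AddCommGroup G] [Fintype G]

private lemma exp_pos' : 0 < AddMonoid.exponent G :=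
  (AddMonoid.exponent_pos).mpr AddMonoid.ExponentExists.of_finite

private lemma exp_smul' (g : G) : AddMonoid.exponent G • g = 0 :=
  AddMonoid.exponent_nsmul_eq_zero g

private lemma sum_map_add_const (s : Multiset G) (c : G) :
    (s.map (fun x => x + c)).sum = s.sum + (Multiset.card s) • c := by
  induction s using Multiset.induction with
  | empty => simp
  | cons a s ih =>
      simp [ih, succ_nsmul]
      abel

private lemma eta_spec (S : Multiset G) (hS : etaConst G ≤ Multiset.card S) :
    ∃ T : Multiset G, T ≤ S ∧ T ≠ 0 ∧ Multiset.card T ≤ AddMonoid.exponent G ∧ T.sum = 0 := by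
  classical
  set n := AddMonoid.exponent G with hn
  have hnpos : 0 < n := exp_pos'
  have hne : {ℓ : ℕ | ∀ S : Multiset G, ℓ ≤ Multiset.card S →
      ∃ T : Multiset G, T ≤ S ∧ T ≠ 0 ∧ Multiset.card T ≤ n ∧ T.sum = 0}.Nonempty := by
    refine ⟨(n - 1) * Fintype.card G + 1, fun S hS => ?_⟩
    by_cases h : ∃ g : G, n ≤ S.count g
    · obtain ⟨g, hg⟩ := h
      refine ⟨Multiset.replicate n g, Multiset.le_count_iff_replicate_le.mp hg, ?_, ?_, ?_⟩
      · apply Multiset.card_pos.mp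
        simpa using hnpos
      · simp
      · rw [Multiset.sum_replicate]
        exact exp_smul' g
    · push_neg at h
      exfalso
      have hbound : Multiset.card S ≤ (n - 1) * Fintype.card G := by
        calc Multiset.card S = ∑ a ∈ S.toFinset, S.count a := (Multiset.toFinset_sum_count_eq S).symm
          _ ≤ ∑ _a ∈ S.toFinset, (n - 1) := by
              exact Finset.sum_le_sum fun a _ => by
                have := h a; omega
          _ = S.toFinset.card * (n - 1) := by rw [Finset.sum_const, smul_eq_mul]
          _ ≤ Fintype.card G * (n - 1) := by
              exact Nat.mul_le_mul_right _ (S.toFinset.card_le_univ)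
          _ = (n - 1) * Fintype.card G := Nat.mul_comm _ _
      omega
  have := Nat.sInf_mem hne
  exact this S hS

/-- Greedy extraction of a zero-sum subsequence of length in `[d, exp G]`. -/
private lemma extract (d : ℕ) (hd1 : 1 ≤ d) (hd2 : 2 * d ≤ AddMonoid.exponent G + 2) :
    ∀ R : Multiset G, etaConst G + d - 1 ≤ Multiset.card R →
    ∃ W : Multiset G, W ≤ R ∧ W.sum = 0 ∧ d ≤ Multiset.card W ∧
      Multiset.card W ≤ AddMonoid.exponent G := by
  induction d using Nat.strong_induction_on with
  | _ d ih =>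
    classical
    intro R hR
    have hRη : etaConst G ≤ Multiset.card R := by omega
    obtain ⟨T, hTR, hTne, hTcard, hTsum⟩ := eta_spec R hRη
    have hT1 : 1 ≤ Multiset.card T := Multiset.card_pos.mpr hTne
    by_cases hcase : d ≤ Multiset.card T
    · exact ⟨T, hTR, hTsum, hcase, hTcard⟩
    · push_neg at hcase
      set t := Multiset.card T with ht
      have hd' : d - t < d := by omega
      have hd'1 : 1 ≤ d - t := by omega
      have hd'2 : 2 * (d - t) ≤ AddMonoid.exponent G + 2 := by omega
      have hcardsub : Multiset.card (R - T) = Multiset.card R - t :=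
        Multiset.card_sub hTR
      have hRT : etaConst G + (d - t) - 1 ≤ Multiset.card (R - T) := by omega
      obtain ⟨W', hW'le, hW'sum, hW'lo, hW'hi⟩ := ih (d - t) hd' hd'1 hd'2 (R - T) hRT
      by_cases hW'd : d ≤ Multiset.card W'
      · exact ⟨W', le_trans hW'le (tsub_le_self), hW'sum, hW'd, hW'hi⟩
      · push_neg at hW'd
        refine ⟨W' + T, ?_, ?_, ?_, ?_⟩
        · exact (le_tsub_iff_right hTR).mp hW'le
        · rw [Multiset.sum_add, hW'sum, hTsum, add_zero]
        · rw [Multiset.card_add]; omega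
        · rw [Multiset.card_add]; omega

end Aux

/-- A refinement of a technical lemma on zero-sum subsequences of length `exp(G)`. -/
theorem stmt_12 (G : Type*) [AddCommGroup G] [Fintype G]
    (S : Multiset G) (hcard : Multiset.card S = etaConst G + AddMonoid.exponent G - 1)
    (C' : Multiset G) (hC' : C' ≤ S) (f : G)
    (hf : ∀ j : ℕ, 1 ≤ j → j ≤ Multiset.card C' →
      ∃ U : Multiset G, U ≤ C' ∧ Multiset.card U = j ∧ U.sum = j • f)
    (hlen : (AddMonoid.exponent G - 1) / 2 ≤ Multiset.card C') :
    ∃ T : Multiset G, T ≤ S ∧ Multiset.card T = AddMonoid.exponent G ∧ T.sum = 0 := by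
  classical
  set n := AddMonoid.exponent G with hn
  have hnpos : 0 < n := exp_pos'
  set m := Multiset.card C' with hm
  by_cases hmn : n ≤ m
  · obtain ⟨U, hU, hUcard, hUsum⟩ := hf n hnpos hmn
    exact ⟨U, le_trans hU hC', hUcard, by rw [hUsum]; exact exp_smul' f⟩
  · push_neg at hmn
    -- translate by -f
    set g : G → G := fun x => x - f with hg
    set S' := S.map g with hS'
    set C'' := C'.map g with hC''
    have hC''S' : C'' ≤ S' := Multiset.map_le_map hC'
    set R := S' - C'' with hR
    have hcardS' : Multiset.card S' = etaConst G + n - 1 := by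
      rw [hS', Multiset.card_map, hcard]
    have hcardC'' : Multiset.card C'' = m := by rw [hC'', Multiset.card_map]
    have hcardR : Multiset.card R = etaConst G + n - 1 - m := by
      rw [hR, Multiset.card_sub hC''S', hcardS', hcardC'']
    set d := n - m with hd
    have hd1 : 1 ≤ d := by omega
    have hd2 : 2 * d ≤ n + 2 := by omega
    have hRd : etaConst G + d - 1 ≤ Multiset.card R := by omega
    obtain ⟨W, hWR, hWsum, hWlo, hWhi⟩ := extract d hd1 hd2 R hRd
    set j := n - Multiset.card W with hj
    have hjm : j ≤ m := by omega
    -- sum of a map by g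
    have hsummap : ∀ s : Multiset G, (s.map g).sum = s.sum + (Multiset.card s) • (-f) := by
      intro s
      have : s.map g = s.map (fun x => x + (-f)) := by
        apply Multiset.map_congr rfl
        intro x _
        simp [hg, sub_eq_add_neg]
      rw [this, sum_map_add_const]
    have key : ∃ T' : Multiset G, T' ≤ S' ∧ Multiset.card T' = n ∧ T'.sum = 0 := by
      rcases Nat.eq_zero_or_pos j with hj0 | hj1
      · exact ⟨W, le_trans hWR tsub_le_self, by omega, hWsum⟩
      · obtain ⟨U, hU, hUcard, hUsum⟩ := hf j hj1 hjm
        refine ⟨W + U.map g, ?_, ?_, ?_⟩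
        · calc W + U.map g ≤ (S' - C'') + C'' :=
                add_le_add hWR (Multiset.map_le_map hU)
            _ = S' := tsub_add_cancel_of_le hC''S'
        · rw [Multiset.card_add, Multiset.card_map, hUcard]; omega
        · rw [Multiset.sum_add, hWsum, hsummap, hUsum, hUcard, zero_add,
            smul_neg, add_neg_cancel]
    obtain ⟨T', hT'S', hT'card, hT'sum⟩ := key
    refine ⟨T'.map (fun x => x + f), ?_, ?_, ?_⟩
    · have h1 : T'.map (fun x => x + f) ≤ S'.map (fun x => x + f) :=
        Multiset.map_le_map hT'S'
      have h2 : S'.map (fun x => x + f) = S := by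
        rw [hS', Multiset.map_map]
        have hid : ((fun x => x + f) ∘ g) = id := by
          funext x; simp [hg]
        rw [hid, Multiset.map_id]
      rwa [h2] at h1
    · rw [Multiset.card_map, hT'card]
    · rw [sum_map_add_const, hT'sum, hT'card, zero_add]
      exact exp_smul' f
end

section
/- Let n ≥ 3 be an integer, let G be a finite abelian group isomorphic to C_2 ⊕ C_2 ⊕ C_{2n}, and let {f_1, f_2, f_3} be a basis of G with ord(f_1) = ord(f_2) = 2 and ord(f_3) = 2n. For every v ∈ [0, n−1] and every a ∈ [2, n−1], the sequence S = f_3^{2n−1−2v} (f_3+f_2)^{2v+1} f_2 (a f_3+f_1) ((1−a) f_3+f_2+f_1), of length 2n+3, contains no nonempty zero-sum subsequence of length at most 2n. -/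
/-!
Write a subsequence `T` of `S` as `f₃^x (f₃+f₂)^y f₂^z (a f₃+f₁)^u ((1-a) f₃+f₂+f₁)^w`.
By independence, `σ(T) = 0` says that `u + w` and `y + z + w` are even and that `2n` divides the
`f₃`-coefficient. Parity forces `u = w`, so `a` cancels and `2n ∣ x + y + u`. Since
`0 < |T| ≤ 2n`, either `x + y + u = 0`, and then `T` is empty, or `x + y + u = 2n`, which leaves
no room for `z` and `u` and forces `T = f₃^(2n-1-2v) (f₃+f₂)^(2v+1)`, whose `f₂`-coefficient
`2v + 1` is odd.
-/

namespace Multiset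

variable {α : Type*}

theorem exists_le_le_eq_add_of_le_add [DecidableEq α] {u s t : Multiset α} (h : u ≤ s + t) :
    ∃ s' ≤ s, ∃ t' ≤ t, u = s' + t' := by
  refine ⟨u ∩ s, inter_le_right, u - u ∩ s, ?_, (add_tsub_cancel_of_le inter_le_left).symm⟩
  rw [Multiset.sub_le_iff_le_add, le_iff_count]
  intro x
  have := le_iff_count.1 h x
  simp only [count_add, count_inter] at this ⊢
  omega

theorem exists_eq_add_replicate_of_le_add_replicate [DecidableEq α] {u s : Multiset α} {n : ℕ}
    {a : α} (h : u ≤ s + replicate n a) : ∃ s' ≤ s, ∃ k ≤ n, u = s' + replicate k a := by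
  obtain ⟨s', hs', t, ht, rfl⟩ := exists_le_le_eq_add_of_le_add h
  obtain ⟨k, hk, rfl⟩ := le_replicate_iff.1 ht
  exact ⟨s', hs', k, hk, rfl⟩

end Multiset

theorem addOrderOf_dvd_of_independent {G : Type*} [AddCommGroup G] {f₁ f₂ f₃ : G}
    (hind : ∀ a b c : ℤ, a • f₁ + b • f₂ + c • f₃ = 0 →
      a • f₁ = 0 ∧ b • f₂ = 0 ∧ c • f₃ = 0)
    {c₁ c₂ c₃ : ℤ} (h : c₁ • f₁ + c₂ • f₂ + c₃ • f₃ = 0) :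
    (addOrderOf f₁ : ℤ) ∣ c₁ ∧ (addOrderOf f₂ : ℤ) ∣ c₂ ∧ (addOrderOf f₃ : ℤ) ∣ c₃ := by
  obtain ⟨h₁, h₂, h₃⟩ := hind c₁ c₂ c₃ h
  exact ⟨addOrderOf_dvd_iff_zsmul_eq_zero.2 h₁, addOrderOf_dvd_iff_zsmul_eq_zero.2 h₂,
    addOrderOf_dvd_iff_zsmul_eq_zero.2 h₃⟩

theorem not_two_mul_dvd_of_bounds {n v x y z u : ℕ} (hv : v ≤ n - 1)
    (hx : x ≤ 2 * n - 1 - 2 * v) (hy : y ≤ 2 * v + 1) (hz : z ≤ 1)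
    (hpos : 0 < x + y + z + 2 * u) (hcard : x + y + z + 2 * u ≤ 2 * n) (hpar : 2 ∣ y + z + u) :
    ¬ 2 * n ∣ x + y + u := by
  rintro ⟨k, hk⟩
  obtain rfl | rfl : k = 0 ∨ k = 1 := by
    rcases Nat.lt_or_ge k 2 with h | h
    · omega
    · nlinarith
  all_goals omega

theorem stmt_15_general (n : ℕ) (G : Type*) [AddCommGroup G]
    (f1 f2 f3 : G)
    (hind : ∀ a b c : ℤ, a • f1 + b • f2 + c • f3 = 0 →
      a • f1 = 0 ∧ b • f2 = 0 ∧ c • f3 = 0)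
    (ho1 : addOrderOf f1 = 2) (ho2 : addOrderOf f2 = 2) (ho3 : addOrderOf f3 = 2 * n)
    (v a : ℕ) (hv : v ≤ n - 1)
    (S : Multiset G)
    (hS : S = Multiset.replicate (2 * n - 1 - 2 * v) f3
            + Multiset.replicate (2 * v + 1) (f3 + f2)
            + {f2, (a : ℤ) • f3 + f1, (1 - (a : ℤ)) • f3 + f2 + f1}) :
    ¬ ∃ T : Multiset G, T ≤ S ∧ T ≠ 0 ∧ Multiset.card T ≤ 2 * n ∧ T.sum = 0 := by
  classical
  rintro ⟨T, hT, hT0, hcard, hsum⟩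
  subst hS
  replace hT : T ≤ Multiset.replicate (2 * n - 1 - 2 * v) f3
      + Multiset.replicate (2 * v + 1) (f3 + f2) + Multiset.replicate 1 f2
      + Multiset.replicate 1 ((a : ℤ) • f3 + f1)
      + Multiset.replicate 1 ((1 - (a : ℤ)) • f3 + f2 + f1) :=
    hT.trans_eq (by simp only [add_assoc]; rfl)
  obtain ⟨T₄, hT₄, w, hw, rfl⟩ := Multiset.exists_eq_add_replicate_of_le_add_replicate hT
  obtain ⟨T₃, hT₃, u, hu, rfl⟩ := Multiset.exists_eq_add_replicate_of_le_add_replicate hT₄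
  obtain ⟨T₂, hT₂, z, hz, rfl⟩ := Multiset.exists_eq_add_replicate_of_le_add_replicate hT₃
  obtain ⟨T₁, hT₁, y, hy, rfl⟩ := Multiset.exists_eq_add_replicate_of_le_add_replicate hT₂
  obtain ⟨x, hx, rfl⟩ := Multiset.le_replicate_iff.1 hT₁
  have hpos := Multiset.card_pos.2 hT0
  simp only [Multiset.card_add, Multiset.card_replicate] at hcard hpos
  have hcoeff : ((u + w : ℕ) : ℤ) • f1 + ((y + z + w : ℕ) : ℤ) • f2 +
      ((x + y : ℕ) + u * a + w * (1 - a) : ℤ) • f3 = 0 := by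
    rw [← hsum]
    simp only [Multiset.sum_add, Multiset.sum_replicate, ← natCast_zsmul]
    push_cast
    module
  obtain ⟨h1, h2, h3⟩ := addOrderOf_dvd_of_independent hind hcoeff
  rw [ho1, Int.natCast_dvd_natCast] at h1
  rw [ho2, Int.natCast_dvd_natCast] at h2
  obtain rfl : u = w := by omega
  rw [show ((x + y : ℕ) + u * a + u * (1 - a) : ℤ) = ((x + y + u : ℕ) : ℤ) by push_cast; ring,
    ho3, Int.natCast_dvd_natCast] at h3
  exact not_two_mul_dvd_of_bounds hv hx hy hz (by omega) (by omega) (by omega) h3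

/-- The sequences of type (η1) contain no short zero-sum subsequence. -/
theorem stmt_15 (n : ℕ) (hn : 3 ≤ n) (G : Type*) [AddCommGroup G] [Fintype G]
    (hG : Nonempty (G ≃+ (ZMod 2 × ZMod 2 × ZMod (2 * n))))
    (f1 f2 f3 : G)
    (hgen : AddSubgroup.closure ({f1, f2, f3} : Set G) = ⊤)
    (hind : ∀ a b c : ℤ, a • f1 + b • f2 + c • f3 = 0 →
      a • f1 = 0 ∧ b • f2 = 0 ∧ c • f3 = 0)
    (ho1 : addOrderOf f1 = 2) (ho2 : addOrderOf f2 = 2) (ho3 : addOrderOf f3 = 2 * n)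
    (v a : ℕ) (hv : v ≤ n - 1) (ha : 2 ≤ a) (ha' : a ≤ n - 1)
    (S : Multiset G)
    (hS : S = Multiset.replicate (2 * n - 1 - 2 * v) f3
            + Multiset.replicate (2 * v + 1) (f3 + f2)
            + {f2, (a : ℤ) • f3 + f1, (1 - (a : ℤ)) • f3 + f2 + f1}) :
    ¬ ∃ T : Multiset G, T ≤ S ∧ T ≠ 0 ∧ Multiset.card T ≤ 2 * n ∧ T.sum = 0 :=
  stmt_15_general n G f1 f2 f3 hind ho1 ho2 ho3 v a hv S hS
end

section
/- Let n ≥ 3 be an integer, let G be a finite abelian group isomorphic to C_2 ⊕ C_2 ⊕ C_{2n}, and let {f_1, f_2, f_3} be a basis of G with ord(f_1) = ord(f_2) = 2 and ord(f_3) = 2n. For all a, b ∈ [2, n−1] with a ≥ b, the sequence S = f_3^{2n−1} (a f_3+f_2) ((1−a) f_3+f_2) (b f_3+f_1) ((1−b) f_3+f_1), of length 2n+3, contains no nonempty zero-sum subsequence of length at most 2n. -/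
/-- The sequences of type (η2) contain no short zero-sum subsequence. -/
theorem stmt_16 (n : ℕ) (hn : 3 ≤ n) (G : Type*) [AddCommGroup G] [Fintype G]
    (hG : Nonempty (G ≃+ (ZMod 2 × ZMod 2 × ZMod (2 * n))))
    (f1 f2 f3 : G)
    (hgen : AddSubgroup.closure ({f1, f2, f3} : Set G) = ⊤)
    (hind : ∀ a b c : ℤ, a • f1 + b • f2 + c • f3 = 0 →
      a • f1 = 0 ∧ b • f2 = 0 ∧ c • f3 = 0)
    (ho1 : addOrderOf f1 = 2) (ho2 : addOrderOf f2 = 2) (ho3 : addOrderOf f3 = 2 * n)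
    (a b : ℕ) (ha : 2 ≤ a) (ha' : a ≤ n - 1) (hb : 2 ≤ b) (hb' : b ≤ n - 1) (hab : b ≤ a)
    (S : Multiset G)
    (hS : S = Multiset.replicate (2 * n - 1) f3
            + {(a : ℤ) • f3 + f2, (1 - (a : ℤ)) • f3 + f2,
               (b : ℤ) • f3 + f1, (1 - (b : ℤ)) • f3 + f1}) :
    ¬ ∃ T : Multiset G, T ≤ S ∧ T ≠ 0 ∧ Multiset.card T ≤ 2 * n ∧ T.sum = 0 := by
  classical
  rintro ⟨T, hTS, hT0, hTcard, hTsum⟩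
  set x1 : G := (a : ℤ) • f3 + f2 with hx1
  set x2 : G := (1 - (a : ℤ)) • f3 + f2 with hx2
  set y1 : G := (b : ℤ) • f3 + f1 with hy1
  set y2 : G := (1 - (b : ℤ)) • f3 + f1 with hy2
  -- nonzero basis elements
  have hf1 : f1 ≠ 0 := by intro h; rw [h, addOrderOf_zero] at ho1; omega
  have hf2 : f2 ≠ 0 := by intro h; rw [h, addOrderOf_zero] at ho2; omega
  have hf1' : ∀ c : ℤ, c • f1 = 0 → (2:ℤ) ∣ c := by
    intro c hc
    have := (addOrderOf_dvd_iff_zsmul_eq_zero (x := f1)).2 hc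
    rwa [ho1] at this
  have hf2' : ∀ c : ℤ, c • f2 = 0 → (2:ℤ) ∣ c := by
    intro c hc
    have := (addOrderOf_dvd_iff_zsmul_eq_zero (x := f2)).2 hc
    rwa [ho2] at this
  have hf3' : ∀ c : ℤ, c • f3 = 0 → ((2*n : ℕ):ℤ) ∣ c := by
    intro c hc
    have := (addOrderOf_dvd_iff_zsmul_eq_zero (x := f3)).2 hc
    rwa [ho3] at this
  have hone1 : ∀ c : ℤ, c = 1 ∨ c = -1 → c • f1 ≠ 0 := by
    rintro c hc h
    have := hf1' c h
    rcases hc with rfl | rfl <;> omega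
  have hone2 : ∀ c : ℤ, c = 1 ∨ c = -1 → c • f2 ≠ 0 := by
    rintro c hc h
    have := hf2' c h
    rcases hc with rfl | rfl <;> omega
  -- pairwise distinctness of the five elements
  have d3x1 : f3 ≠ x1 := by
    intro h
    have h0 : (0:ℤ) • f1 + (1:ℤ) • f2 + ((a:ℤ) - 1) • f3 = 0 := by
      rw [hx1] at h; linear_combination (norm := module) -h
    exact hone2 1 (Or.inl rfl) (hind _ _ _ h0).2.1
  have d3x2 : f3 ≠ x2 := by
    intro h
    have h0 : (0:ℤ) • f1 + (1:ℤ) • f2 + (-(a:ℤ)) • f3 = 0 := by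
      rw [hx2] at h; linear_combination (norm := module) -h
    exact hone2 1 (Or.inl rfl) (hind _ _ _ h0).2.1
  have d3y1 : f3 ≠ y1 := by
    intro h
    have h0 : (1:ℤ) • f1 + (0:ℤ) • f2 + ((b:ℤ) - 1) • f3 = 0 := by
      rw [hy1] at h; linear_combination (norm := module) -h
    exact hone1 1 (Or.inl rfl) (hind _ _ _ h0).1
  have d3y2 : f3 ≠ y2 := by
    intro h
    have h0 : (1:ℤ) • f1 + (0:ℤ) • f2 + (-(b:ℤ)) • f3 = 0 := by
      rw [hy2] at h; linear_combination (norm := module) -h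
    exact hone1 1 (Or.inl rfl) (hind _ _ _ h0).1
  have dx1x2 : x1 ≠ x2 := by
    intro h
    rw [hx1, hx2] at h
    have h0 : (2*(a:ℤ) - 1) • f3 = 0 := by linear_combination (norm := module) h
    have := hf3' _ h0
    have h2 : (2:ℤ) ∣ 2*(a:ℤ) - 1 := dvd_trans ⟨(n:ℤ), by push_cast; ring⟩ this
    omega
  have dx1y1 : x1 ≠ y1 := by
    intro h
    rw [hx1, hy1] at h
    have h0 : (-1:ℤ) • f1 + (1:ℤ) • f2 + ((a:ℤ) - b) • f3 = 0 := by
      linear_combination (norm := module) h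
    exact hone2 1 (Or.inl rfl) (hind _ _ _ h0).2.1
  have dx1y2 : x1 ≠ y2 := by
    intro h
    rw [hx1, hy2] at h
    have h0 : (-1:ℤ) • f1 + (1:ℤ) • f2 + ((a:ℤ) - (1 - b)) • f3 = 0 := by
      linear_combination (norm := module) h
    exact hone2 1 (Or.inl rfl) (hind _ _ _ h0).2.1
  have dx2y1 : x2 ≠ y1 := by
    intro h
    rw [hx2, hy1] at h
    have h0 : (-1:ℤ) • f1 + (1:ℤ) • f2 + ((1 - (a:ℤ)) - b) • f3 = 0 := by
      linear_combination (norm := module) h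
    exact hone2 1 (Or.inl rfl) (hind _ _ _ h0).2.1
  have dx2y2 : x2 ≠ y2 := by
    intro h
    rw [hx2, hy2] at h
    have h0 : (-1:ℤ) • f1 + (1:ℤ) • f2 + ((b:ℤ) - a) • f3 = 0 := by
      linear_combination (norm := module) h
    exact hone2 1 (Or.inl rfl) (hind _ _ _ h0).2.1
  have dy1y2 : y1 ≠ y2 := by
    intro h
    rw [hy1, hy2] at h
    have h0 : (2*(b:ℤ) - 1) • f3 = 0 := by linear_combination (norm := module) h
    have := hf3' _ h0
    have h2 : (2:ℤ) ∣ 2*(b:ℤ) - 1 := dvd_trans ⟨(n:ℤ), by push_cast; ring⟩ this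
    omega
  -- counts in S
  have hScount : ∀ g : G, S.count g =
      (if f3 = g then 2*n - 1 else 0) + ((if g = x1 then 1 else 0) +
        ((if g = x2 then 1 else 0) + ((if g = y1 then 1 else 0) + (if g = y2 then 1 else 0)))) := by
    intro g
    rw [hS]
    simp only [Multiset.count_add, Multiset.count_replicate, Multiset.insert_eq_cons,
      Multiset.count_cons, Multiset.count_singleton]
    omega
  set k := T.count f3 with hk
  set e1 := T.count x1 with he1
  set e2 := T.count x2 with he2
  set g1 := T.count y1 with hg1
  set g2 := T.count y2 with hg2
  have hcnt : ∀ g : G, T.count g ≤ S.count g := fun g => Multiset.count_le_of_le g hTS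
  have hkle : k ≤ 2*n - 1 := by
    have := hcnt f3; rw [hScount f3] at this
    simpa [d3x1, d3x2, d3y1, d3y2] using this
  have he1le : e1 ≤ 1 := by
    have := hcnt x1; rw [hScount x1] at this
    simpa [d3x1, dx1x2, dx1y1, dx1y2] using this
  have he2le : e2 ≤ 1 := by
    have := hcnt x2; rw [hScount x2] at this
    simpa [d3x2, dx1x2.symm, dx2y1, dx2y2] using this
  have hg1le : g1 ≤ 1 := by
    have := hcnt y1; rw [hScount y1] at this
    simpa [d3y1, dx1y1.symm, dx2y1.symm, dy1y2] using this
  have hg2le : g2 ≤ 1 := by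
    have := hcnt y2; rw [hScount y2] at this
    simpa [d3y2, dx1y2.symm, dx2y2.symm, dy1y2.symm] using this
  -- decomposition of T
  have hTdec : T = Multiset.replicate k f3 + (Multiset.replicate e1 x1 +
      (Multiset.replicate e2 x2 + (Multiset.replicate g1 y1 + Multiset.replicate g2 y2))) := by
    ext g
    simp only [Multiset.count_add, Multiset.count_replicate]
    by_cases h3 : g = f3
    · subst h3
      rw [if_pos rfl, if_neg (Ne.symm d3x1), if_neg (Ne.symm d3x2), if_neg (Ne.symm d3y1),
        if_neg (Ne.symm d3y2)]
      omega
    by_cases hh1 : g = x1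
    · subst hh1
      rw [if_neg d3x1, if_pos rfl, if_neg (Ne.symm dx1x2), if_neg (Ne.symm dx1y1),
        if_neg (Ne.symm dx1y2)]
      omega
    by_cases hh2 : g = x2
    · subst hh2
      rw [if_neg d3x2, if_neg dx1x2, if_pos rfl, if_neg (Ne.symm dx2y1), if_neg (Ne.symm dx2y2)]
      omega
    by_cases hh3 : g = y1
    · subst hh3
      rw [if_neg d3y1, if_neg dx1y1, if_neg dx2y1, if_pos rfl, if_neg (Ne.symm dy1y2)]
      omega
    by_cases hh4 : g = y2
    · subst hh4
      rw [if_neg d3y2, if_neg dx1y2, if_neg dx2y2, if_neg dy1y2, if_pos rfl]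
      omega
    · have := hcnt g
      rw [hScount g] at this
      rw [if_neg (Ne.symm h3), if_neg (Ne.symm hh1), if_neg (Ne.symm hh2), if_neg (Ne.symm hh3),
        if_neg (Ne.symm hh4)]
      rw [if_neg (Ne.symm h3), if_neg hh1, if_neg hh2, if_neg hh3, if_neg hh4] at this
      omega
  have hcard : Multiset.card T = k + e1 + e2 + g1 + g2 := by
    rw [hTdec]
    simp only [Multiset.card_add, Multiset.card_replicate]
    ring
  have hsum : T.sum = k • f3 + (e1 • x1 + (e2 • x2 + (g1 • y1 + g2 • y2))) := by
    rw [hTdec]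
    simp only [Multiset.sum_add, Multiset.sum_replicate]
  -- express the sum in the basis
  have hsum2 : ((g1:ℤ) + g2) • f1 + ((e1:ℤ) + e2) • f2 +
      ((k:ℤ) + e1 * a + e2 * (1 - a) + g1 * b + g2 * (1 - b)) • f3 = 0 := by
    rw [← hTsum, hsum, hx1, hx2, hy1, hy2]
    simp only [← natCast_zsmul]
    module
  obtain ⟨h1, h2, h3⟩ := hind _ _ _ hsum2
  have hd1 : (2:ℤ) ∣ (g1:ℤ) + g2 := hf1' _ h1
  have hd2 : (2:ℤ) ∣ (e1:ℤ) + e2 := hf2' _ h2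
  have hee : e1 = e2 := by omega
  have hgg : g1 = g2 := by omega
  -- the f3 coefficient simplifies
  have h3' : ((k:ℤ) + e1 + g1) • f3 = 0 := by
    rw [← h3, hee, hgg]; congr 1; ring
  have hd3 : ((2*n : ℕ):ℤ) ∣ ((k + e1 + g1 : ℕ) : ℤ) := by
    push_cast
    exact hf3' _ h3'
  have hd3' : 2*n ∣ k + e1 + g1 := by exact_mod_cast hd3
  have hpos : 0 < k + e1 + g1 := by
    by_contra h
    push_neg at h
    apply hT0
    rw [← Multiset.card_eq_zero, hcard]
    omega
  have hle : 2*n ≤ k + e1 + g1 := Nat.le_of_dvd hpos hd3'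
  have hub : k + e1 + g1 ≤ 2*n + 1 := by omega
  have heq2n : k + e1 + g1 = 2*n := by
    rcases Nat.lt_or_ge (k + e1 + g1) (2*n + 1) with h | h
    · omega
    · exfalso
      have hval : k + e1 + g1 = 2*n + 1 := by omega
      have : 2*n ∣ 1 := by
        have := Nat.dvd_sub hd3' (dvd_refl (2*n))
        rwa [hval, Nat.add_sub_cancel_left] at this
      have := Nat.le_of_dvd one_pos this
      omega
  -- final contradiction
  rw [hcard] at hTcard
  omega
end

section
/- Let n ≥ 2 be an integer, let G be a finite abelian group isomorphic to C_2 ⊕ C_2 ⊕ C_{2n}, and let {f_1, f_2, f_3} be a basis of G with ord(f_1) = ord(f_2) = 2 and ord(f_3) = 2n. Let d_1, …, d_{2n+1} be elements of the subgroup ⟨f_1, f_2⟩ and set S = ∏_{i=1}^{2n+1} (f_3+d_i) · f_2 · f_1 and S' = ∏_{i=1}^{2n+1} d_i. Then S contains no nonempty zero-sum subsequence of length at most 2n if and only if σ(S') ∉ supp(S'). -/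
/-!
Write a subsequence `T` of `S` as `(f₃ + D) · E` with `D ⊆ S'` and `E ⊆ f₂ · f₁`. Its sum is
`|D| f₃ + (σ(D) + σ(E))` with the bracket in `⟨f₁, f₂⟩`, so by independence `T` is zero-sum iff
`ord(f₃) = 2n` divides `|D|` and `σ(D) + σ(E) = 0`. For `0 < |T| ≤ 2n` this leaves `|D| = 0`, impossible
since `f₁, f₂, f₁ + f₂ ≠ 0`, or `|D| = 2n` and `E` empty; then `S'` is `D` plus one term `d`
and `σ(S') = σ(D) + d = d`. Conversely, if `σ(S') ∈ S'`, removing it leaves `2n` terms of sum `0`.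
-/

namespace Multiset

variable {α β M : Type*}

theorem sum_map_const_add [AddCommMonoid M] (c : M) (s : Multiset M) :
    (s.map (c + ·)).sum = card s • c + s.sum := by
  rw [sum_map_add, map_const', sum_replicate, map_id']

theorem exists_eq_map_add_of_le_map_add [DecidableEq β] {f : α → β} (s : Multiset α)
    {t u : Multiset β} (h : u ≤ s.map f + t) : ∃ s' ≤ s, ∃ t' ≤ t, u = s'.map f + t' := by
  induction s using Multiset.induction generalizing u with
  | empty => exact ⟨0, le_rfl, u, by simpa using h, by simp⟩
  | cons a s ih =>
    rw [map_cons, cons_add] at h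
    by_cases ha : f a ∈ u
    · rw [← cons_erase ha, cons_le_cons_iff] at h
      obtain ⟨s', hs', t', ht', hu⟩ := ih h
      refine ⟨a ::ₘ s', cons_le_cons a hs', t', ht', ?_⟩
      rw [map_cons, cons_add, ← hu, cons_erase ha]
    · obtain ⟨s', hs', t', ht', hu⟩ := ih ((le_cons_of_notMem ha).mp h)
      exact ⟨s', hs'.trans (le_cons_self s a), t', ht', hu⟩

theorem sum_ne_zero_of_le_pair [AddCommMonoid M] {a b : M} {s : Multiset M}
    (ha : a ≠ 0) (hb : b ≠ 0) (hab : a + b ≠ 0) (hs : s ≤ {a, b}) (hs0 : s ≠ 0) :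
    s.sum ≠ 0 := by
  rw [← mem_powerset] at hs
  simp only [insert_eq_cons, powerset_cons, mem_add, mem_powerset, le_singleton, mem_map,
    exists_eq_or_imp, cons_zero, existsAndEq, true_and] at hs
  rcases hs with (rfl | rfl) | rfl | rfl <;> simp_all

theorem sum_mem_of_le_of_card_eq_add_one [AddCommMonoid M] {s t : Multiset M} (hts : t ≤ s)
    (hcard : card s = card t + 1) (ht : t.sum = 0) : s.sum ∈ s := by
  obtain ⟨u, rfl⟩ := le_iff_exists_add.mp hts
  obtain ⟨x, rfl⟩ := card_eq_one.mp (by simpa using hcard)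
  simp [ht]

end Multiset

section Independent

variable {G : Type*} [AddCommGroup G] {f1 f2 f3 : G}

theorem nsmul_eq_zero_and_eq_zero_of_nsmul_add_eq_zero
    (hind : ∀ a b c : ℤ, a • f1 + b • f2 + c • f3 = 0 → a • f1 = 0 ∧ b • f2 = 0 ∧ c • f3 = 0)
    {k : ℕ} {x : G} (hx : x ∈ AddSubgroup.closure ({f1, f2} : Set G)) (h : k • f3 + x = 0) :
    k • f3 = 0 ∧ x = 0 := by
  obtain ⟨a, b, rfl⟩ := AddSubgroup.mem_closure_pair.mp hx
  obtain ⟨ha, hb, hk⟩ := hind a b k (by rw [natCast_zsmul, ← h]; abel)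
  rw [natCast_zsmul] at hk
  exact ⟨hk, by rw [ha, hb, add_zero]⟩

theorem sum_mem_of_short_zero_sum
    (hind : ∀ a b c : ℤ, a • f1 + b • f2 + c • f3 = 0 → a • f1 = 0 ∧ b • f2 = 0 ∧ c • f3 = 0)
    (hf1 : f1 ≠ 0) (hf2 : f2 ≠ 0) {n : ℕ} (ho3 : addOrderOf f3 = 2 * n)
    {S' : Multiset G} (hS'card : Multiset.card S' = 2 * n + 1)
    (hS'mem : ∀ d ∈ S', d ∈ AddSubgroup.closure ({f1, f2} : Set G))
    {T : Multiset G} (hT : T ≤ S'.map (f3 + ·) + {f2, f1}) (hT0 : T ≠ 0)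
    (hTcard : Multiset.card T ≤ 2 * n) (hTsum : T.sum = 0) :
    S'.sum ∈ S' := by
  classical
  obtain ⟨D, hD, E, hE, rfl⟩ := Multiset.exists_eq_map_add_of_le_map_add S' hT
  have hmem : D.sum + E.sum ∈ AddSubgroup.closure ({f1, f2} : Set G) := by
    refine AddSubgroup.add_mem _
      (AddSubgroup.multiset_sum_mem _ _ fun d hd => hS'mem d (Multiset.mem_of_le hD hd))
      (AddSubgroup.multiset_sum_mem _ _ fun x hx => AddSubgroup.subset_closure ?_)
    simpa [or_comm] using Multiset.mem_of_le hE hx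
  rw [Multiset.sum_add, Multiset.sum_map_const_add, add_assoc] at hTsum
  obtain ⟨hk, hDE⟩ := nsmul_eq_zero_and_eq_zero_of_nsmul_add_eq_zero hind hmem hTsum
  have hdvd : 2 * n ∣ Multiset.card D := ho3 ▸ addOrderOf_dvd_of_nsmul_eq_zero hk
  rw [Multiset.card_add, Multiset.card_map] at hTcard
  obtain hD0 | hDn : Multiset.card D = 0 ∨ Multiset.card D = 2 * n := by
    rcases Nat.eq_zero_or_pos (Multiset.card D) with h | h
    · exact .inl h
    · exact .inr (le_antisymm (by omega) (Nat.le_of_dvd h hdvd))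
  · rw [Multiset.card_eq_zero] at hD0
    subst hD0
    simp only [Multiset.map_zero, zero_add, Multiset.sum_zero] at hT0 hDE
    have hf21 : f2 + f1 ≠ 0 := fun h =>
      hf1 (by simpa using (hind 1 1 0 (by simpa [add_comm] using h)).1)
    exact absurd hDE (Multiset.sum_ne_zero_of_le_pair hf2 hf1 hf21 hE hT0)
  · have hE0 : E = 0 := Multiset.card_eq_zero.mp (by omega)
    subst hE0
    rw [Multiset.sum_zero, add_zero] at hDE
    exact Multiset.sum_mem_of_le_of_card_eq_add_one hD (by omega) hDE

end Independent

theorem exists_zero_sum_of_sum_mem {G : Type*} [AddCommGroup G] {f3 : G} {n : ℕ}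
    (ho3 : addOrderOf f3 = n) {S' : Multiset G} (hS'card : Multiset.card S' = n + 1)
    (h : S'.sum ∈ S') :
    ∃ T ≤ S'.map (f3 + ·), Multiset.card T = n ∧ T.sum = 0 := by
  classical
  have hcons := Multiset.cons_erase h
  have hcard : Multiset.card (S'.erase S'.sum) = n := by
    rw [← hcons, Multiset.card_cons] at hS'card
    omega
  have hsum : (S'.erase S'.sum).sum = 0 := by
    simpa using Multiset.sum_erase h
  refine ⟨(S'.erase S'.sum).map (f3 + ·), Multiset.map_le_map (Multiset.erase_le _ _), ?_, ?_⟩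
  · rw [Multiset.card_map, hcard]
  · rw [Multiset.sum_map_const_add, hcard, hsum, add_zero, ← ho3, addOrderOf_nsmul_eq_zero]

theorem stmt_17_general (n : ℕ) (hn : 2 ≤ n) (G : Type*) [AddCommGroup G]
    (f1 f2 f3 : G)
    (hind : ∀ a b c : ℤ, a • f1 + b • f2 + c • f3 = 0 →
      a • f1 = 0 ∧ b • f2 = 0 ∧ c • f3 = 0)
    (ho1 : addOrderOf f1 = 2) (ho2 : addOrderOf f2 = 2) (ho3 : addOrderOf f3 = 2 * n)
    (S' : Multiset G) (hS'card : Multiset.card S' = 2 * n + 1)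
    (hS'mem : ∀ d ∈ S', d ∈ AddSubgroup.closure ({f1, f2} : Set G))
    (S : Multiset G)
    (hS : S = Multiset.map (fun d => f3 + d) S' + {f2, f1}) :
    (¬ ∃ T : Multiset G, T ≤ S ∧ T ≠ 0 ∧ Multiset.card T ≤ 2 * n ∧ T.sum = 0) ↔
    S'.sum ∉ S' := by
  have hf1 : f1 ≠ 0 := by rintro rfl; simp at ho1
  have hf2 : f2 ≠ 0 := by rintro rfl; simp at ho2
  subst hS
  refine not_iff_not.mpr ⟨fun ⟨T, hT, hT0, hTcard, hTsum⟩ => ?_, fun h => ?_⟩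
  · exact sum_mem_of_short_zero_sum hind hf1 hf2 ho3 hS'card hS'mem hT hT0 hTcard hTsum
  · obtain ⟨T, hT, hTcard, hTsum⟩ := exists_zero_sum_of_sum_mem ho3 hS'card h
    refine ⟨T, hT.trans (Multiset.le_add_right _ _), ?_, hTcard.le, hTsum⟩
    rw [← Multiset.card_pos, hTcard]
    omega

/-- The sequences of type (η3) contain no short zero-sum subsequence
iff `σ(S') ∉ supp(S')`. -/
theorem stmt_17 (n : ℕ) (hn : 2 ≤ n) (G : Type*) [AddCommGroup G] [Fintype G]
    (hG : Nonempty (G ≃+ (ZMod 2 × ZMod 2 × ZMod (2 * n))))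
    (f1 f2 f3 : G)
    (hgen : AddSubgroup.closure ({f1, f2, f3} : Set G) = ⊤)
    (hind : ∀ a b c : ℤ, a • f1 + b • f2 + c • f3 = 0 →
      a • f1 = 0 ∧ b • f2 = 0 ∧ c • f3 = 0)
    (ho1 : addOrderOf f1 = 2) (ho2 : addOrderOf f2 = 2) (ho3 : addOrderOf f3 = 2 * n)
    (S' : Multiset G) (hS'card : Multiset.card S' = 2 * n + 1)
    (hS'mem : ∀ d ∈ S', d ∈ AddSubgroup.closure ({f1, f2} : Set G))
    (S : Multiset G)
    (hS : S = Multiset.map (fun d => f3 + d) S' + {f2, f1}) :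
    (¬ ∃ T : Multiset G, T ≤ S ∧ T ≠ 0 ∧ Multiset.card T ≤ 2 * n ∧ T.sum = 0) ↔
    S'.sum ∉ S' :=
  stmt_17_general n hn G f1 f2 f3 hind ho1 ho2 ho3 S' hS'card hS'mem S hS
end

section
/- Let n ≥ 2 be an integer, let G be a finite abelian group isomorphic to C_2 ⊕ C_2 ⊕ C_{2n}, and let H = 2G = {2g : g ∈ G} be the unique subgroup of G with G/H ≅ C_2^3 (H is cyclic of order n). If S is a sequence over G of length 2n+3 containing no short zero-sum subsequence, then no element of S lies in H, i.e., supp(S) ∩ H = ∅. -/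
/-!
Let `φ : G → G/2G ≅ 𝔽₂³`; its kernel `2G` has order `n`. Given `x ∈ S ∩ 2G`, split `S - x` greedily
into blocks of length at most 2 with sum in `2G` (elements of `2G`, pairs with equal image) and a
remainder whose images are distinct and nonzero, hence of length at most 7. Either there are
`n - 1` blocks, or the remainder has at least 6 elements, so three of them map onto a line of the
Fano plane and form a further block. Together with `{x}` this gives `n` blocks of total length at
most `2n` with sums in `2G`, and pigeonholing their prefix sums in `2G` yields a nonempty union
of blocks with sum 0.
-/

local notation "𝔽₂³" => ZMod 2 × ZMod 2 × ZMod 2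

open Multiset

section

variable {G : Type*} [AddCommGroup G]

theorem List.exists_sublist_sum_eq_zero_of_card_le {H : AddSubgroup G} [Finite H] (l : List G)
    (hl : ∀ a ∈ l, a ∈ H) (hcard : Nat.card H ≤ l.length) :
    ∃ l' : List G, l'.Sublist l ∧ l' ≠ [] ∧ l'.sum = 0 := by
  have hprefix (i : ℕ) : (l.take i).sum ∈ H :=
    H.list_sum_mem fun a ha => hl a (List.mem_of_mem_take ha)
  obtain ⟨i, j, hij, hsum⟩ :
      ∃ i j : Fin (l.length + 1), i ≠ j ∧ (l.take i).sum = (l.take j).sum := by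
    by_contra! hinj
    have := Nat.card_le_card_of_injective (fun i : Fin (l.length + 1) => (⟨_, hprefix i⟩ : H))
      fun i j h => by_contra fun hne => hinj i j hne (congrArg Subtype.val h)
    simp only [Nat.card_eq_fintype_card, Fintype.card_fin] at this
    omega
  wlog hlt : i < j generalizing i j
  · exact this j i hij.symm hsum.symm (lt_of_le_of_ne (not_lt.1 hlt) hij.symm)
  refine ⟨(l.drop i).take (j - i), (List.take_sublist _ _).trans (List.drop_sublist _ _), ?_, ?_⟩
  · simp only [ne_eq, List.take_eq_nil_iff, List.drop_eq_nil_iff, not_or]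
    omega
  · have := List.take_add (l := l) (i := i) (j := j - i)
    rw [Nat.add_sub_cancel' hlt.le] at this
    rw [this, List.sum_append] at hsum
    exact (left_eq_add.1 hsum)

theorem exists_le_sum_eq_zero_of_blocks {H : AddSubgroup G} [Finite H] (l : List (Multiset G))
    (hl : ∀ B ∈ l, B ≠ 0 ∧ B.sum ∈ H) (hcard : Nat.card H ≤ l.length) :
    ∃ T ≤ l.sum, T ≠ 0 ∧ T.sum = 0 := by
  obtain ⟨s, hs, hs0, hsum⟩ := (l.map Multiset.sum).exists_sublist_sum_eq_zero_of_card_le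
    (by simpa using fun B hB => (hl B hB).2) (by simpa using hcard)
  obtain ⟨l', hl', rfl⟩ := List.sublist_map_iff.1 hs
  obtain ⟨B, hB⟩ := List.exists_mem_of_ne_nil l' (by simpa using hs0)
  refine ⟨l'.sum, hl'.sum_le_sum fun _ _ => zero_le _, ?_, ?_⟩
  · exact ne_bot_of_le_ne_bot (hl B (hl'.subset hB)).1 (List.le_sum_of_mem hB)
  · rw [← hsum]
    exact map_list_sum Multiset.sumAddMonoidHom l'

theorem exists_blocks_add_remainder {K : Type*} [AddCommGroup K] (φ : G →+ K)
    (hK : ∀ k : K, k + k = 0) (T : Multiset G) :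
    ∃ (l : List (Multiset G)) (R : Multiset G), l.sum + R = T ∧
      (∀ B ∈ l, B ≠ 0 ∧ card B ≤ 2 ∧ B.sum ∈ φ.ker) ∧ (0 ::ₘ R.map φ).Nodup := by
  classical
  induction T using Multiset.induction_on with
  | empty => exact ⟨[], 0, by simp, by simp, by simp⟩
  | cons a T ih =>
    obtain ⟨l, R, rfl, hl, hR⟩ := ih
    by_cases ha : φ a = 0
    · refine ⟨{a} :: l, R, by simp, ?_, hR⟩
      simpa [ha] using hl
    by_cases hr : ∃ r ∈ R, φ r = φ a
    · obtain ⟨r, hr, hra⟩ := hr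
      refine ⟨{a, r} :: l, R.erase r, ?_, ?_, nodup_of_le ?_ hR⟩
      · conv_rhs => rw [← cons_erase hr]
        simp
      · simpa [hra, hK] using hl
      · exact cons_le_cons _ (map_le_map (erase_le r R))
    · refine ⟨l, a ::ₘ R, by simp, hl, ?_⟩
      rw [map_cons, cons_swap, nodup_cons]
      exact ⟨by simpa [ha] using hr, hR⟩

theorem exists_line_avoiding (z : 𝔽₂³) :
    ∃ a b : 𝔽₂³, a ≠ 0 ∧ b ≠ 0 ∧ a ≠ b ∧ a ≠ z ∧ b ≠ z ∧ a + b ≠ z := by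
  revert z
  decide

theorem Finset.exists_three_add_eq_zero {F : Finset 𝔽₂³} (h0 : 0 ∉ F) (h6 : 6 ≤ F.card) :
    ∃ a ∈ F, ∃ b ∈ F, ∃ c ∈ F, a ≠ b ∧ a ≠ c ∧ b ≠ c ∧ a + b + c = 0 := by
  obtain ⟨z, hz⟩ : ∃ z, (Fᶜ).erase 0 ⊆ {z} := by
    refine Finset.card_le_one_iff_subset_singleton.1 ?_
    have : 0 ∈ Fᶜ := Finset.mem_compl.2 h0
    rw [Finset.card_erase_of_mem this]
    simp only [Finset.card_compl, Fintype.card_prod, ZMod.card]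
    omega
  have hF (k : 𝔽₂³) (hk : k ≠ 0) (hkz : k ≠ z) : k ∈ F := by
    by_contra hkF
    exact hkz (Finset.mem_singleton.1 (hz (by simp [hk, hkF])))
  obtain ⟨a, b, ha, hb, hab, haz, hbz, hcz⟩ := exists_line_avoiding z
  have hc : a + b ≠ 0 := fun h => hab ((eq_neg_of_add_eq_zero_left h).trans (CharTwo.neg_eq b))
  refine ⟨a, hF a ha haz, b, hF b hb hbz, a + b, hF _ hc hcz, hab, by simpa, by simpa,
    CharTwo.add_self_eq_zero _⟩

theorem exists_le_card_eq_three_sum_mem_ker (φ : G →+ 𝔽₂³) {R : Multiset G}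
    (hR : (0 ::ₘ R.map φ).Nodup) (h6 : 6 ≤ card R) :
    ∃ B ≤ R, card B = 3 ∧ B.sum ∈ φ.ker := by
  classical
  rw [nodup_cons] at hR
  obtain ⟨a, ha, b, hb, c, hc, hab, hac, hbc, habc⟩ :=
    Finset.exists_three_add_eq_zero (F := (R.map φ).toFinset) (by simpa using hR.1)
      (by rwa [toFinset_card_of_nodup hR.2, card_map])
  simp only [mem_toFinset, mem_map] at ha hb hc
  obtain ⟨x, hx, rfl⟩ := ha
  obtain ⟨y, hy, rfl⟩ := hb
  obtain ⟨z, hz, rfl⟩ := hc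
  have hxyz : (x ::ₘ y ::ₘ {z}).Nodup := by
    simp only [nodup_cons, mem_cons, mem_singleton, not_or, nodup_singleton, and_true]
    exact ⟨⟨fun h => hab (congrArg φ h), fun h => hac (congrArg φ h)⟩,
      fun h => hbc (congrArg φ h)⟩
  refine ⟨x ::ₘ y ::ₘ {z}, (le_iff_subset hxyz).2 ?_, by simp, ?_⟩
  · simp [cons_subset, hx, hy, hz]
  · simpa [add_assoc] using habc

theorem card_list_sum_le {α : Type*} {k : ℕ} (l : List (Multiset α)) (h : ∀ B ∈ l, card B ≤ k) :
    card l.sum ≤ k * l.length := by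
  calc card l.sum = (l.map card).sum := map_list_sum Multiset.cardHom l
    _ ≤ (l.map card).length • k := List.sum_le_card_nsmul _ k (by simpa using h)
    _ = k * l.length := by rw [List.length_map, smul_eq_mul, mul_comm]

theorem exists_blocks_of_le_card (φ : G →+ 𝔽₂³) {m : ℕ} {T : Multiset G}
    (hT : 2 * m + 4 ≤ card T) :
    ∃ L : List (Multiset G), L.length = m ∧ (∀ B ∈ L, B ≠ 0 ∧ B.sum ∈ φ.ker) ∧
      L.sum ≤ T ∧ card L.sum ≤ 2 * m + 1 := by
  obtain ⟨l, R, rfl, hl, hR⟩ := exists_blocks_add_remainder φ CharTwo.add_self_eq_zero T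
  have hR7 : card R ≤ 7 := by
    have := toFinset_card_of_nodup hR ▸ Finset.card_le_univ (0 ::ₘ R.map φ).toFinset
    simp only [card_cons, card_map, Fintype.card_prod, ZMod.card] at this
    omega
  have hlcard := card_list_sum_le l fun B hB => (hl B hB).2.1
  rw [card_add] at hT
  by_cases hlong : m ≤ l.length
  · refine ⟨l.take m, by simpa, fun B hB => ?_, ?_, ?_⟩
    · exact ⟨(hl B (List.mem_of_mem_take hB)).1, (hl B (List.mem_of_mem_take hB)).2.2⟩
    · exact ((List.take_sublist m l).sum_le_sum fun _ _ => zero_le _).trans (le_add_right le_rfl)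
    · have := card_list_sum_le (l.take m) fun B hB => (hl B (List.mem_of_mem_take hB)).2.1
      simp only [List.length_take] at this
      omega
  · obtain ⟨B, hBR, hB3, hB⟩ := exists_le_card_eq_three_sum_mem_ker φ hR (by omega)
    refine ⟨B :: l, by simp; omega, fun B' hB' => ?_, ?_, ?_⟩
    · rcases List.mem_cons.1 hB' with rfl | hB'
      · exact ⟨fun h => by simp [h] at hB3, hB⟩
      · exact ⟨(hl B' hB').1, (hl B' hB').2.2⟩
    · rw [List.sum_cons, add_comm l.sum R]
      exact add_le_add_left hBR _
    · rw [List.sum_cons, card_add]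
      omega

theorem exists_short_zero_sum_of_mem_ker (φ : G →+ 𝔽₂³) [Finite φ.ker] {n : ℕ}
    (hn : Nat.card φ.ker ≤ n) {S : Multiset G} (hS : 2 * n + 3 ≤ card S) {x : G} (hxS : x ∈ S)
    (hx : x ∈ φ.ker) :
    ∃ T, T ≤ S ∧ T ≠ 0 ∧ card T ≤ 2 * n ∧ T.sum = 0 := by
  classical
  obtain ⟨m, rfl⟩ : ∃ m, n = m + 1 := Nat.exists_eq_add_one.2 (Nat.card_pos.trans_le hn)
  obtain ⟨L, hLlen, hL, hLS, hLcard⟩ := exists_blocks_of_le_card φ (m := m) (T := S.erase x)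
    (by rw [card_erase_of_mem hxS, Nat.pred_eq_sub_one]; omega)
  obtain ⟨T, hT, hT0, hTsum⟩ := exists_le_sum_eq_zero_of_blocks ({x} :: L)
    (List.forall_mem_cons.2 ⟨⟨singleton_ne_zero x, by rwa [sum_singleton]⟩, hL⟩)
    (by simpa [hLlen] using hn)
  refine ⟨T, hT.trans ?_, hT0, (card_le_card hT).trans ?_, hTsum⟩
  · rw [List.sum_cons, singleton_add, ← cons_erase hxS]
    exact cons_le_cons x hLS
  · simp only [List.sum_cons, card_add, card_singleton]
    omega

def reduceModTwo (n : ℕ) : ZMod 2 × ZMod 2 × ZMod (2 * n) →+ 𝔽₂³ :=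
  (AddMonoidHom.id _).prodMap ((AddMonoidHom.id _).prodMap
    (ZMod.castHom (dvd_mul_right 2 n) (ZMod 2)).toAddMonoidHom)

theorem reduceModTwo_surjective (n : ℕ) : Function.Surjective (reduceModTwo n) :=
  Function.surjective_id.prodMap
    (Function.surjective_id.prodMap (ZMod.castHom_surjective (dvd_mul_right 2 n)))

theorem card_ker_reduceModTwo_comp {n : ℕ} (e : G ≃+ ZMod 2 × ZMod 2 × ZMod (2 * n)) :
    Nat.card ((reduceModTwo n).comp e.toAddMonoidHom).ker = n := by
  have hsurj : Function.Surjective ((reduceModTwo n).comp e.toAddMonoidHom) :=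
    (reduceModTwo_surjective n).comp e.surjective
  have := AddSubgroup.card_mul_index ((reduceModTwo n).comp e.toAddMonoidHom).ker
  rw [AddSubgroup.index_ker, AddMonoidHom.range_eq_top.2 hsurj, AddSubgroup.card_top,
    Nat.card_congr e.toEquiv] at this
  simp only [Nat.card_prod, Nat.card_zmod] at this
  omega

end

theorem stmt_18_general (n : ℕ) (hn : 2 ≤ n) (G : Type*) [AddCommGroup G]
    (hG : Nonempty (G ≃+ (ZMod 2 × ZMod 2 × ZMod (2 * n))))
    (S : Multiset G) (hcard : Multiset.card S = 2 * n + 3)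
    (h : ¬ ∃ T : Multiset G, T ≤ S ∧ T ≠ 0 ∧ Multiset.card T ≤ 2 * n ∧ T.sum = 0) :
    ∀ x ∈ S, x ∉ {y : G | ∃ g : G, 2 • g = y} := by
  rintro x hxS ⟨g, rfl⟩
  obtain ⟨e⟩ := hG
  have : NeZero (2 * n) := ⟨by omega⟩
  have : Finite G := Finite.of_equiv _ e.symm.toEquiv
  refine h (exists_short_zero_sum_of_mem_ker ((reduceModTwo n).comp e.toAddMonoidHom)
    (card_ker_reduceModTwo_comp e).le hcard.ge hxS ?_)
  rw [AddMonoidHom.mem_ker, _root_.map_nsmul, two_nsmul, CharTwo.add_self_eq_zero]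

/-- A sequence of length `2n+3` over `G ≅ C₂ ⊕ C₂ ⊕ C₂ₙ` without short zero-sum
subsequence contains no element of the subgroup `H = 2G`. -/
theorem stmt_18 (n : ℕ) (hn : 2 ≤ n) (G : Type*) [AddCommGroup G] [Fintype G]
    (hG : Nonempty (G ≃+ (ZMod 2 × ZMod 2 × ZMod (2 * n))))
    (S : Multiset G) (hcard : Multiset.card S = 2 * n + 3)
    (h : ¬ ∃ T : Multiset G, T ≤ S ∧ T ≠ 0 ∧ Multiset.card T ≤ 2 * n ∧ T.sum = 0) :
    ∀ x ∈ S, x ∉ {y : G | ∃ g : G, 2 • g = y} :=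
  stmt_18_general n hn G hG S hcard h
end

section
/- Let n ≥ 3 be an integer, let G be a finite abelian group isomorphic to C_2 ⊕ C_2 ⊕ C_{2n}, and let {f_1, f_2, f_3} be a basis of G with ord(f_1) = ord(f_2) = 2 and ord(f_3) = 2n. For every a ∈ [2, n−1] and all α, β ∈ [0, n−1], the sequence S = 0^{2α+1} f_2^{2n−2α−1} f_3^{2n−1−2β} (f_3+f_2)^{2β+1} (a f_3+f_1) ((1−a) f_3+f_2+f_1), of length 4n+2, contains no zero-sum subsequence of length 2n. -/
/-- The sequences of type (s1) contain no zero-sum subsequence of length `2n`. -/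
theorem stmt_19 (n : ℕ) (hn : 3 ≤ n) (G : Type*) [AddCommGroup G] [Fintype G]
    (hG : Nonempty (G ≃+ (ZMod 2 × ZMod 2 × ZMod (2 * n))))
    (f1 f2 f3 : G)
    (hgen : AddSubgroup.closure ({f1, f2, f3} : Set G) = ⊤)
    (hind : ∀ a b c : ℤ, a • f1 + b • f2 + c • f3 = 0 →
      a • f1 = 0 ∧ b • f2 = 0 ∧ c • f3 = 0)
    (ho1 : addOrderOf f1 = 2) (ho2 : addOrderOf f2 = 2) (ho3 : addOrderOf f3 = 2 * n)
    (a α β : ℕ) (ha : 2 ≤ a) (ha' : a ≤ n - 1) (hα : α ≤ n - 1) (hβ : β ≤ n - 1)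
    (S : Multiset G)
    (hS : S = Multiset.replicate (2 * α + 1) (0 : G)
            + Multiset.replicate (2 * n - 2 * α - 1) f2
            + Multiset.replicate (2 * n - 1 - 2 * β) f3
            + Multiset.replicate (2 * β + 1) (f3 + f2)
            + {(a : ℤ) • f3 + f1, (1 - (a : ℤ)) • f3 + f2 + f1}) :
    ¬ ∃ T : Multiset G, T ≤ S ∧ Multiset.card T = 2 * n ∧ T.sum = 0 := by
  classical
  rintro ⟨T, hTS, hTcard, hTsum⟩
  set x : G := (a : ℤ) • f3 + f1 with hxdef
  set y : G := (1 - (a : ℤ)) • f3 + f2 + f1 with hydef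
  -- basic nonvanishing
  have hf1 : f1 ≠ 0 := by intro h; rw [h, addOrderOf_zero] at ho1; omega
  have hf2 : f2 ≠ 0 := by intro h; rw [h, addOrderOf_zero] at ho2; omega
  have hf3 : f3 ≠ 0 := by intro h; rw [h, addOrderOf_zero] at ho3; omega
  -- distinctness of the six values
  have d02 : (0 : G) ≠ f2 := fun h => hf2 h.symm
  have d03 : (0 : G) ≠ f3 := fun h => hf3 h.symm
  have d04 : (0 : G) ≠ f3 + f2 := by
    intro h
    have := (hind 0 1 1 (by linear_combination (norm := module) -h)).2.1
    exact hf2 (by simpa using this)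
  have d0x : (0 : G) ≠ x := by
    intro h
    have := (hind 1 0 (a : ℤ) (by rw [hxdef] at h; linear_combination (norm := module) -h)).1
    exact hf1 (by simpa using this)
  have d0y : (0 : G) ≠ y := by
    intro h
    have := (hind 1 1 (1 - (a:ℤ)) (by rw [hydef] at h; linear_combination (norm := module) -h)).1
    exact hf1 (by simpa using this)
  have d23 : f2 ≠ f3 := by
    intro h
    have := (hind 0 1 (-1) (by linear_combination (norm := module) h)).2.1
    exact hf2 (by simpa using this)
  have d24 : f2 ≠ f3 + f2 := by
    intro h
    have := (hind 0 0 1 (by linear_combination (norm := module) -h)).2.2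
    exact hf3 (by simpa using this)
  have d2x : f2 ≠ x := by
    intro h
    have := (hind 1 (-1) (a:ℤ) (by rw [hxdef] at h; linear_combination (norm := module) -h)).1
    exact hf1 (by simpa using this)
  have d2y : f2 ≠ y := by
    intro h
    have := (hind 1 0 (1-(a:ℤ)) (by rw [hydef] at h; linear_combination (norm := module) -h)).1
    exact hf1 (by simpa using this)
  have d34 : f3 ≠ f3 + f2 := by
    intro h
    have := (hind 0 1 0 (by linear_combination (norm := module) -h)).2.1
    exact hf2 (by simpa using this)
  have d3x : f3 ≠ x := by
    intro h
    have := (hind 1 0 ((a:ℤ)-1) (by rw [hxdef] at h; linear_combination (norm := module) -h)).1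
    exact hf1 (by simpa using this)
  have d3y : f3 ≠ y := by
    intro h
    have := (hind 1 1 (-(a:ℤ)) (by rw [hydef] at h; linear_combination (norm := module) -h)).1
    exact hf1 (by simpa using this)
  have d4x : f3 + f2 ≠ x := by
    intro h
    have := (hind 1 (-1) ((a:ℤ)-1) (by rw [hxdef] at h; linear_combination (norm := module) -h)).1
    exact hf1 (by simpa using this)
  have d4y : f3 + f2 ≠ y := by
    intro h
    have := (hind 1 0 (-(a:ℤ)) (by rw [hydef] at h; linear_combination (norm := module) -h)).1
    exact hf1 (by simpa using this)
  have dxy : x ≠ y := by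
    intro h
    have := (hind 0 (-1) (2*(a:ℤ)-1)
      (by rw [hxdef, hydef] at h; linear_combination (norm := module) h)).2.1
    exact hf2 (by simpa using this)
  -- counts
  set k0 := T.count 0 with hk0
  set k2 := T.count f2 with hk2
  set k3 := T.count f3 with hk3
  set k4 := T.count (f3 + f2) with hk4
  set kx := T.count x with hkx
  set ky := T.count y with hky
  have hcnt : ∀ g : G, T.count g ≤ S.count g := fun g => Multiset.count_le_of_le g hTS
  have hS0 : S.count 0 = 2 * α + 1 := by
    rw [hS]
    simp [Multiset.count_replicate, Multiset.insert_eq_cons, d02, d02.symm, d03, d03.symm, d04, d04.symm, d0x, d0x.symm, d0y, d0y.symm]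
  have hS2 : S.count f2 = 2 * n - 2 * α - 1 := by
    rw [hS]
    simp [Multiset.count_replicate, Multiset.insert_eq_cons, d02.symm, d02, d23, d23.symm, d24, d24.symm, d2x, d2x.symm, d2y, d2y.symm]
  have hS3 : S.count f3 = 2 * n - 1 - 2 * β := by
    rw [hS]
    simp [Multiset.count_replicate, Multiset.insert_eq_cons, d03.symm, d03, d23.symm, d23, d34, d34.symm, d3x, d3x.symm, d3y, d3y.symm]
  have hS4 : S.count (f3 + f2) = 2 * β + 1 := by
    rw [hS]
    simp [Multiset.count_replicate, Multiset.insert_eq_cons, d04.symm, d04, d24.symm, d24, d34.symm, d34, d4x, d4x.symm, d4y, d4y.symm]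
  have hSx : S.count x = 1 := by
    rw [hS]
    simp [Multiset.count_replicate, Multiset.insert_eq_cons, d0x.symm, d0x, d2x.symm, d2x, d3x.symm, d3x, d4x.symm, d4x, dxy, dxy.symm]
  have hSy : S.count y = 1 := by
    rw [hS]
    simp [Multiset.count_replicate, Multiset.insert_eq_cons, d0y.symm, d0y, d2y.symm, d2y, d3y.symm, d3y, d4y.symm, d4y, dxy.symm, dxy]
  have hb0 : k0 ≤ 2 * α + 1 := hS0 ▸ hcnt 0
  have hb2 : k2 ≤ 2 * n - 2 * α - 1 := hS2 ▸ hcnt f2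
  have hb3 : k3 ≤ 2 * n - 1 - 2 * β := hS3 ▸ hcnt f3
  have hb4 : k4 ≤ 2 * β + 1 := hS4 ▸ hcnt (f3 + f2)
  have hbx : kx ≤ 1 := hSx ▸ hcnt x
  have hby : ky ≤ 1 := hSy ▸ hcnt y
  -- decomposition of T
  have hdecomp : T = Multiset.replicate k0 0 + Multiset.replicate k2 f2 +
      Multiset.replicate k3 f3 + Multiset.replicate k4 (f3 + f2) +
      Multiset.replicate kx x + Multiset.replicate ky y := by
    ext g
    simp only [Multiset.count_add, Multiset.count_replicate]
    by_cases h0 : g = 0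
    · subst h0; simp [d02, d02.symm, d03, d03.symm, d04, d04.symm, d0x, d0x.symm, d0y, d0y.symm, hk0]
    by_cases h2 : g = f2
    · subst h2; simp [d02.symm, d02, d23, d23.symm, d24, d24.symm, d2x, d2x.symm, d2y, d2y.symm, hk2]
    by_cases h3 : g = f3
    · subst h3; simp [d03.symm, d03, d23.symm, d23, d34, d34.symm, d3x, d3x.symm, d3y, d3y.symm, hk3]
    by_cases h4 : g = f3 + f2
    · subst h4; simp [d04.symm, d04, d24.symm, d24, d34.symm, d34, d4x, d4x.symm, d4y, d4y.symm, hk4]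
    by_cases hhx : g = x
    · subst hhx; simp [d0x.symm, d0x, d2x.symm, d2x, d3x.symm, d3x, d4x.symm, d4x, dxy, dxy.symm, hkx]
    by_cases hhy : g = y
    · subst hhy; simp [d0y.symm, d0y, d2y.symm, d2y, d3y.symm, d3y, d4y.symm, d4y, dxy.symm, dxy, hky]
    have hgS : S.count g = 0 := by
      rw [hS]
      simp [Multiset.count_replicate, Multiset.insert_eq_cons, h0, h2, h3, h4, hhx, hhy, Ne.symm h0, Ne.symm h2, Ne.symm h3, Ne.symm h4, Ne.symm hhx, Ne.symm hhy]
    have : T.count g = 0 := Nat.le_zero.mp (hgS ▸ hcnt g)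
    simp [this, h0, h2, h3, h4, hhx, hhy, Ne.symm h0, Ne.symm h2, Ne.symm h3, Ne.symm h4, Ne.symm hhx, Ne.symm hhy]
  -- cardinality
  rw [hdecomp] at hTcard
  simp only [Multiset.card_add, Multiset.card_replicate] at hTcard
  -- sum
  rw [hdecomp] at hTsum
  simp only [Multiset.sum_add, Multiset.sum_replicate, ← natCast_zsmul] at hTsum
  have hcomb : ((kx:ℤ) + ky) • f1 + ((k2:ℤ) + k4 + ky) • f2 +
      ((k3:ℤ) + k4 + kx * (a:ℤ) + ky * (1 - (a:ℤ))) • f3 = 0 := by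
    rw [hxdef, hydef] at hTsum
    linear_combination (norm := module) hTsum
  obtain ⟨e1, e2, e3⟩ := hind _ _ _ hcomb
  have hd1 : (2:ℤ) ∣ (kx:ℤ) + ky := by
    have := addOrderOf_dvd_iff_zsmul_eq_zero.mpr e1
    rwa [ho1] at this; 
  have hd2 : (2:ℤ) ∣ (k2:ℤ) + k4 + ky := by
    have := addOrderOf_dvd_iff_zsmul_eq_zero.mpr e2
    rwa [ho2] at this
  have hd3 : ((2*n:ℕ):ℤ) ∣ (k3:ℤ) + k4 + kx * (a:ℤ) + ky * (1 - (a:ℤ)) := by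
    have := addOrderOf_dvd_iff_zsmul_eq_zero.mpr e3
    rwa [ho3] at this
  clear e1 e2 e3 hcomb hTsum hdecomp hS0 hS2 hS3 hS4 hSx hSy hcnt
  -- final arithmetic
  interval_cases kx <;> interval_cases ky
  · -- kx = 0, ky = 0
    have hd3' : 2 * n ∣ k3 + k4 := by
      have : ((2*n:ℕ):ℤ) ∣ ((k3 + k4 : ℕ):ℤ) := by push_cast; convert hd3 using 1 <;> push_cast <;> ring
      exact_mod_cast this
    rcases Nat.lt_or_ge (k3 + k4) (2 * n) with h | h
    · have := Nat.eq_zero_of_dvd_of_lt hd3' h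
      omega
    · have h34 : k3 + k4 = 2 * n := by omega
      omega
  · -- kx = 0, ky = 1
    omega
  · -- kx = 1, ky = 0
    omega
  · -- kx = 1, ky = 1
    have hd3' : 2 * n ∣ k3 + k4 + 1 := by
      have : ((2*n:ℕ):ℤ) ∣ ((k3 + k4 + 1 : ℕ):ℤ) := by push_cast; convert hd3 using 1 <;> push_cast <;> ring
      exact_mod_cast this
    rcases Nat.lt_or_ge (k3 + k4 + 1) (2 * n) with h | h
    · have := Nat.eq_zero_of_dvd_of_lt hd3' h
      omega
    · have h2n : 2 * n ∣ (k3 + k4 + 1) - 2 * n := Nat.dvd_sub hd3' dvd_rfl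
      have hle : (k3 + k4 + 1) - 2 * n < 2 * n := by omega
      have := Nat.eq_zero_of_dvd_of_lt h2n hle
      omega
end
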